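/- arXiv:1512.05512 — 6 statements merged into one kernel-verified Lean document; each statement's English description precedes it below -/
import Mathlib

section
/- For any c > 0 and S > 0, every complex solution q of the equation c⁻¹ tan(qS) = −q is real, and every complex solution q of q tan(qS) = c⁻¹ is real. -/
open Complex in
lemma tan_im_mul_im_pos (z : ℂ) (hz : z.im ≠ 0) :
    0 < (Complex.tan z).im * z.im := by
  have hcos : Complex.cos z ≠ 0 := by
    rw [Complex.cos_ne_zero_iff]
    intro k hk
    apply hz
    rw [hk]
    simp
  have hzeq : z = (z.re : ℂ) + (z.im : ℂ) * Complex.I := (Complex.re_add_im z).symm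
  have hsin : Complex.sin z =
      (Real.sin z.re * Real.cosh z.im : ℝ) + (Real.cos z.re * Real.sinh z.im : ℝ) * Complex.I := by
    conv_lhs => rw [hzeq]
    rw [Complex.sin_add_mul_I]
    push_cast [← Complex.ofReal_sin, ← Complex.ofReal_cos, ← Complex.ofReal_sinh,
      ← Complex.ofReal_cosh]
    ring
  have hcosz : Complex.cos z =
      (Real.cos z.re * Real.cosh z.im : ℝ) - (Real.sin z.re * Real.sinh z.im : ℝ) * Complex.I := by
    conv_lhs => rw [hzeq]
    rw [Complex.cos_add_mul_I]
    push_cast [← Complex.ofReal_sin, ← Complex.ofReal_cos, ← Complex.ofReal_sinh,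
      ← Complex.ofReal_cosh]
    ring
  have him : (Complex.tan z).im =
      Real.sinh z.im * Real.cosh z.im / Complex.normSq (Complex.cos z) := by
    rw [Complex.tan_eq_sin_div_cos, Complex.div_im]
    rw [hsin, hcosz]
    simp only [Complex.add_im, Complex.add_re, Complex.sub_im, Complex.sub_re,
      Complex.ofReal_re, Complex.ofReal_im, Complex.mul_re, Complex.mul_im,
      Complex.I_re, Complex.I_im, mul_zero, mul_one, zero_mul, add_zero, zero_add,
      sub_zero, zero_sub]
    have hsq : Real.sin z.re ^ 2 + Real.cos z.re ^ 2 = 1 := Real.sin_sq_add_cos_sq z.re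
    rw [div_sub_div_same]
    congr 1
    linear_combination Real.sinh z.im * Real.cosh z.im * hsq
  have hN : 0 < Complex.normSq (Complex.cos z) := by
    simpa [Complex.normSq_pos] using hcos
  rw [him]
  have h1 : 0 < Real.sinh z.im * z.im := by
    rcases lt_or_gt_of_ne hz with h | h
    · exact mul_pos_of_neg_of_neg (by simpa using Real.sinh_neg_iff.mpr h) h
    · exact mul_pos (Real.sinh_pos_iff.mpr h) h
  have h2 : 0 < Real.cosh z.im := Real.cosh_pos z.im
  calc 0 < (Real.sinh z.im * z.im) * Real.cosh z.im / Complex.normSq (Complex.cos z) := by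
        positivity
    _ = Real.sinh z.im * Real.cosh z.im / Complex.normSq (Complex.cos z) * z.im := by ring

theorem stmt_1 (c S : ℝ) (hc : 0 < c) (hS : 0 < S) :
    (∀ q : ℂ, (c : ℂ)⁻¹ * Complex.tan (q * (S : ℂ)) = -q → q.im = 0) ∧
    (∀ q : ℂ, q * Complex.tan (q * (S : ℂ)) = (c : ℂ)⁻¹ → q.im = 0) := by
  constructor
  · intro q hq
    by_contra him
    have hz : (q * (S : ℂ)).im ≠ 0 := by
      simp only [Complex.mul_im, Complex.ofReal_re, Complex.ofReal_im, mul_zero, add_zero,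
        zero_add]
      exact mul_ne_zero him (ne_of_gt hS)
    have key := tan_im_mul_im_pos _ hz
    have heq : c⁻¹ * (Complex.tan (q * (S : ℂ))).im = -q.im := by
      have := congrArg Complex.im hq
      simpa [Complex.ofReal_inv] using this
    have htan : (Complex.tan (q * (S : ℂ))).im = -c * q.im := by
      field_simp at heq ⊢
      linarith
    rw [htan] at key
    simp only [Complex.mul_im, Complex.ofReal_re, Complex.ofReal_im, mul_zero, add_zero,
      zero_add] at key
    nlinarith [sq_nonneg q.im, mul_pos hc hS]
  · intro q hq
    by_contra him
    have hz : (q * (S : ℂ)).im ≠ 0 := by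
      simp only [Complex.mul_im, Complex.ofReal_re, Complex.ofReal_im, mul_zero, add_zero,
        zero_add]
      exact mul_ne_zero him (ne_of_gt hS)
    have hq0 : q ≠ 0 := by
      intro h
      rw [h, zero_mul] at hq
      have hcne : ((c : ℂ))⁻¹ ≠ 0 := inv_ne_zero (Complex.ofReal_ne_zero.mpr hc.ne')
      exact hcne hq.symm
    have htan : Complex.tan (q * (S : ℂ)) = (c : ℂ)⁻¹ / q := by
      rw [eq_div_iff hq0]
      linear_combination hq
    have key := tan_im_mul_im_pos _ hz
    rw [htan] at key
    have hdiv : ((c : ℂ)⁻¹ / q).im = -(c⁻¹ * q.im) / Complex.normSq q := by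
      rw [Complex.div_im]
      simp [Complex.ofReal_inv]
      ring
    rw [hdiv] at key
    simp only [Complex.mul_im, Complex.ofReal_re, Complex.ofReal_im, mul_zero, add_zero,
      zero_add] at key
    have hnq : 0 < Complex.normSq q := by simpa [Complex.normSq_pos] using hq0
    have hc' : 0 < c⁻¹ := inv_pos.mpr hc
    have h2 : -(c⁻¹ * q.im) / Complex.normSq q * (q.im * S) =
        -(c⁻¹ * q.im ^ 2 * S / Complex.normSq q) := by ring
    rw [h2] at key
    have h3 : 0 ≤ c⁻¹ * q.im ^ 2 * S / Complex.normSq q := by positivity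
    linarith
end

section
/- Let c > 0, S > 0 and p ≥ 1 an integer. The equation q·tan(qS) = c⁻¹ has a solution q in the open interval ((p−1)π/S, (p−1/2)π/S), and the equation c⁻¹·tan(qS) = −q has a solution q in the open interval ((p−1/2)π/S, pπ/S). -/
open Filter Real Set Topology

private lemma aux_tendsto_top (S : ℝ) (hS : 0 < S) (n : ℤ) :
    Tendsto (fun q => Real.tan (q * S)) (𝓝[<] (((n : ℝ) + 1 / 2) * Real.pi / S)) atTop := by
  have h1 : Tendsto (fun q : ℝ => q * S - n * Real.pi)
      (𝓝[<] (((n : ℝ) + 1 / 2) * Real.pi / S)) (𝓝[<] (Real.pi / 2)) := by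
    rw [tendsto_nhdsWithin_iff]
    constructor
    · have hco : Continuous (fun q : ℝ => q * S - (n : ℝ) * Real.pi) := by fun_prop
      have h := hco.tendsto (((n : ℝ) + 1 / 2) * Real.pi / S)
      have he : (((n : ℝ) + 1 / 2) * Real.pi / S) * S - (n : ℝ) * Real.pi = Real.pi / 2 := by
        field_simp; ring
      rw [he] at h
      exact h.mono_left nhdsWithin_le_nhds
    · filter_upwards [self_mem_nhdsWithin] with q hq
      simp only [Set.mem_Iio] at *
      have h2 : q * S < ((n : ℝ) + 1 / 2) * Real.pi := (lt_div_iff₀ hS).1 hq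
      nlinarith
  have h2 := Real.tendsto_tan_pi_div_two.comp h1
  refine h2.congr fun q => ?_
  simp only [Function.comp]
  have := Real.tan_add_int_mul_pi (q * S - n * Real.pi) n
  rw [sub_add_cancel] at this
  exact this.symm

private lemma aux_tendsto_bot (S : ℝ) (hS : 0 < S) (n : ℤ) :
    Tendsto (fun q => Real.tan (q * S)) (𝓝[>] (((n : ℝ) - 1 / 2) * Real.pi / S)) atBot := by
  have h1 : Tendsto (fun q : ℝ => q * S - n * Real.pi)
      (𝓝[>] (((n : ℝ) - 1 / 2) * Real.pi / S)) (𝓝[>] (-(Real.pi / 2))) := by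
    rw [tendsto_nhdsWithin_iff]
    constructor
    · have hco : Continuous (fun q : ℝ => q * S - (n : ℝ) * Real.pi) := by fun_prop
      have h := hco.tendsto (((n : ℝ) - 1 / 2) * Real.pi / S)
      have he : (((n : ℝ) - 1 / 2) * Real.pi / S) * S - (n : ℝ) * Real.pi = -(Real.pi / 2) := by
        field_simp; ring
      rw [he] at h
      exact h.mono_left nhdsWithin_le_nhds
    · filter_upwards [self_mem_nhdsWithin] with q hq
      simp only [Set.mem_Ioi] at *
      have h2 : ((n : ℝ) - 1 / 2) * Real.pi < q * S := (div_lt_iff₀ hS).1 hq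
      nlinarith
  have h2 := Real.tendsto_tan_neg_pi_div_two.comp h1
  refine h2.congr fun q => ?_
  simp only [Function.comp]
  have := Real.tan_add_int_mul_pi (q * S - n * Real.pi) n
  rw [sub_add_cancel] at this
  exact this.symm

theorem stmt_2 (c S : ℝ) (hc : 0 < c) (hS : 0 < S) (p : ℕ) (hp : 1 ≤ p) :
    (∃ q ∈ Set.Ioo (((p : ℝ) - 1) * Real.pi / S) (((p : ℝ) - 1 / 2) * Real.pi / S),
      q * Real.tan (q * S) = c⁻¹) ∧
    (∃ q ∈ Set.Ioo (((p : ℝ) - 1 / 2) * Real.pi / S) ((p : ℝ) * Real.pi / S),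
      c⁻¹ * Real.tan (q * S) = -q) := by
  have hπ := Real.pi_pos
  have hp1 : (1 : ℝ) ≤ (p : ℝ) := by exact_mod_cast hp
  have hS' : S ≠ 0 := ne_of_gt hS
  have hcinv : (0 : ℝ) < c⁻¹ := inv_pos.2 hc
  set a : ℝ := ((p : ℝ) - 1) * Real.pi / S with ha
  set b : ℝ := ((p : ℝ) - 1 / 2) * Real.pi / S with hb
  set d : ℝ := (p : ℝ) * Real.pi / S with hd
  have haS : a * S = ((p : ℝ) - 1) * Real.pi := div_mul_cancel₀ _ hS'
  have hbS : b * S = ((p : ℝ) - 1 / 2) * Real.pi := div_mul_cancel₀ _ hS'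
  have hdS : d * S = (p : ℝ) * Real.pi := div_mul_cancel₀ _ hS'
  have hab : a < b := by
    rw [ha, hb]
    exact (div_lt_div_iff_of_pos_right hS).2 (by nlinarith)
  have hbd : b < d := by
    rw [hb, hd]
    exact (div_lt_div_iff_of_pos_right hS).2 (by nlinarith)
  have hbpos : 0 < b := by
    rw [hb]
    exact div_pos (by nlinarith) hS
  have hdpos : 0 < d := lt_trans hbpos hbd
  constructor
  · -- first equation
    have htan : Tendsto (fun q => Real.tan (q * S)) (𝓝[<] b) atTop := by
      have h := aux_tendsto_top S hS ((p : ℤ) - 1)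
      have he : ((((p : ℤ) - 1 : ℤ) : ℝ) + 1 / 2) * Real.pi / S = b := by
        rw [hb]; push_cast; ring
      rwa [he] at h
    have hid : Tendsto (fun q : ℝ => q) (𝓝[<] b) (𝓝 b) :=
      tendsto_id.mono_left nhdsWithin_le_nhds
    have hmul : Tendsto (fun q : ℝ => q * Real.tan (q * S)) (𝓝[<] b) atTop :=
      hid.pos_mul_atTop hbpos htan
    have hev : ∀ᶠ q in 𝓝[<] b, c⁻¹ < q * Real.tan (q * S) ∧ q ∈ Set.Ioo a b := by
      filter_upwards [hmul.eventually_gt_atTop c⁻¹, self_mem_nhdsWithin,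
        (eventually_gt_nhds hab).filter_mono nhdsWithin_le_nhds] with q h1 h2 h3
      exact ⟨h1, h3, h2⟩
    obtain ⟨t, ht1, ht2⟩ := hev.exists
    have hcos : ∀ q ∈ Set.Icc a t, Real.cos (q * S) ≠ 0 := by
      intro q hq hq0
      obtain ⟨k, hk⟩ := Real.cos_eq_zero_iff.1 hq0
      have hq1 : ((p : ℝ) - 1) * Real.pi ≤ q * S := by
        rw [← haS]; exact mul_le_mul_of_nonneg_right hq.1 hS.le
      have hq2 : q * S < ((p : ℝ) - 1 / 2) * Real.pi := by
        rw [← hbS]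
        exact mul_lt_mul_of_pos_right (lt_of_le_of_lt hq.2 ht2.2) hS
      rw [hk] at hq1 hq2
      have h1 : 2 * ((p : ℝ) - 1) ≤ 2 * (k : ℝ) + 1 := by nlinarith
      have h2 : 2 * (k : ℝ) + 1 < 2 * (p : ℝ) - 1 := by nlinarith
      have h1' : 2 * ((p : ℤ) - 1) ≤ 2 * k + 1 := by exact_mod_cast h1
      have h2' : 2 * k + 1 < 2 * (p : ℤ) - 1 := by exact_mod_cast h2
      omega
    have hcont : ContinuousOn (fun q : ℝ => q * Real.tan (q * S)) (Set.Icc a t) := by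
      apply ContinuousOn.mul continuousOn_id
      apply Real.continuousOn_tan.comp (Continuous.continuousOn (by fun_prop))
      exact hcos
    have hfa : a * Real.tan (a * S) = 0 := by
      have haS' : a * S = ((p - 1 : ℕ) : ℝ) * Real.pi := by
        rw [haS]; push_cast [Nat.cast_sub hp]; ring
      rw [haS', Real.tan_nat_mul_pi, mul_zero]
    have hsub := intermediate_value_Icc (le_of_lt ht2.1) hcont
    have hmem : c⁻¹ ∈ Set.Icc (a * Real.tan (a * S)) (t * Real.tan (t * S)) := by
      rw [hfa]
      exact ⟨le_of_lt hcinv, le_of_lt ht1⟩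
    obtain ⟨q, hq, hfq0⟩ := hsub hmem
    have hfq : q * Real.tan (q * S) = c⁻¹ := hfq0
    refine ⟨q, ⟨?_, lt_of_le_of_lt hq.2 ht2.2⟩, hfq⟩
    rcases lt_or_eq_of_le hq.1 with h | h
    · exact h
    · exfalso; rw [← h, hfa] at hfq; exact absurd hfq.symm (ne_of_gt hcinv)
  · -- second equation
    have htan : Tendsto (fun q => Real.tan (q * S)) (𝓝[>] b) atBot := by
      have h := aux_tendsto_bot S hS (p : ℤ)
      have he : (((p : ℤ) : ℝ) - 1 / 2) * Real.pi / S = b := by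
        rw [hb]; push_cast; ring
      rwa [he] at h
    have hmul : Tendsto (fun q : ℝ => c⁻¹ * Real.tan (q * S)) (𝓝[>] b) atBot :=
      htan.const_mul_atBot hcinv
    have hev : ∀ᶠ q in 𝓝[>] b, c⁻¹ * Real.tan (q * S) + q < 0 ∧ q ∈ Set.Ioo b d := by
      filter_upwards [hmul.eventually_lt_atBot (-d), self_mem_nhdsWithin,
        (eventually_lt_nhds hbd).filter_mono nhdsWithin_le_nhds] with q h1 h2 h3
      exact ⟨by linarith, h2, h3⟩
    obtain ⟨t, ht1, ht2⟩ := hev.exists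
    have hcos : ∀ q ∈ Set.Icc t d, Real.cos (q * S) ≠ 0 := by
      intro q hq hq0
      obtain ⟨k, hk⟩ := Real.cos_eq_zero_iff.1 hq0
      have hq1 : ((p : ℝ) - 1 / 2) * Real.pi < q * S := by
        rw [← hbS]
        exact mul_lt_mul_of_pos_right (lt_of_lt_of_le ht2.1 hq.1) hS
      have hq2 : q * S ≤ (p : ℝ) * Real.pi := by
        rw [← hdS]; exact mul_le_mul_of_nonneg_right hq.2 hS.le
      rw [hk] at hq1 hq2
      have h1 : 2 * (p : ℝ) - 1 < 2 * (k : ℝ) + 1 := by nlinarith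
      have h2 : 2 * (k : ℝ) + 1 ≤ 2 * (p : ℝ) := by nlinarith
      have h1' : 2 * (p : ℤ) - 1 < 2 * k + 1 := by exact_mod_cast h1
      have h2' : 2 * k + 1 ≤ 2 * (p : ℤ) := by exact_mod_cast h2
      omega
    have hcont : ContinuousOn (fun q : ℝ => c⁻¹ * Real.tan (q * S) + q) (Set.Icc t d) := by
      apply ContinuousOn.add ?_ continuousOn_id
      apply ContinuousOn.mul continuousOn_const
      apply Real.continuousOn_tan.comp (Continuous.continuousOn (by fun_prop))
      exact hcos
    have hfd : c⁻¹ * Real.tan (d * S) + d = d := by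
      have hdS' : d * S = ((p : ℕ) : ℝ) * Real.pi := hdS
      rw [hdS', Real.tan_nat_mul_pi, mul_zero, zero_add]
    have hsub := intermediate_value_Icc (le_of_lt ht2.2) hcont
    have hmem : (0 : ℝ) ∈ Set.Icc (c⁻¹ * Real.tan (t * S) + t)
        (c⁻¹ * Real.tan (d * S) + d) := by
      rw [hfd]
      exact ⟨le_of_lt ht1, le_of_lt hdpos⟩
    obtain ⟨q, hq, hfq0⟩ := hsub hmem
    have hfq : c⁻¹ * Real.tan (q * S) + q = 0 := hfq0
    refine ⟨q, ⟨lt_of_lt_of_le ht2.1 hq.1, ?_⟩, by linarith⟩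
    rcases lt_or_eq_of_le hq.2 with h | h
    · exact h
    · exfalso; rw [h, hfd] at hfq; exact absurd hfq (ne_of_gt hdpos)
end

section
/- Let c > 0, S > 0, and let q_m for odd m satisfy q_m·tan(q_m S) = c⁻¹ with q_m ∈ ((m−1)π/(2S), m·π/(2S)). Then for every δ > 0 there exists M such that for all odd m ≥ M: π(m−1)/(2S) + (1−δ)·2c⁻¹/(π(m−1)) ≤ q_m ≤ π(m−1)/(2S) + 2c⁻¹/(π(m−1)). -/
set_option maxHeartbeats 1000000 in
theorem stmt_3 (c S : ℝ) (hc : 0 < c) (hS : 0 < S) (q : ℕ → ℝ)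
    (hq : ∀ m : ℕ, Odd m → q m * Real.tan (q m * S) = c⁻¹ ∧
      q m ∈ Set.Ioo (((m : ℝ) - 1) * Real.pi / (2 * S)) ((m : ℝ) * Real.pi / (2 * S))) :
    ∀ δ : ℝ, 0 < δ → ∃ M : ℕ, ∀ m : ℕ, M ≤ m → Odd m →
      Real.pi * ((m : ℝ) - 1) / (2 * S) + (1 - δ) * (2 * c⁻¹) / (Real.pi * ((m : ℝ) - 1)) ≤ q m ∧
      q m ≤ Real.pi * ((m : ℝ) - 1) / (2 * S) + (2 * c⁻¹) / (Real.pi * ((m : ℝ) - 1)) := by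
  intro δ hδ
  have hπ := Real.pi_pos
  set B := Real.pi / (2 * S) with hBdef
  clear_value B
  have hBpos : 0 < B := by rw [hBdef]; positivity
  refine ⟨⌈(c⁻¹ + B) / (δ * B)⌉₊ + ⌈(c⁻¹ + B) / B⌉₊ + 3, ?_⟩
  intro m hm hodd
  obtain ⟨heq, hmem⟩ := hq m hodd
  obtain ⟨hlo, hhi⟩ := hmem
  obtain ⟨k, hk⟩ := hodd
  set p : ℝ := (m : ℝ) - 1 with hpdef
  clear_value p
  have hmM : (⌈(c⁻¹ + B) / (δ * B)⌉₊ + ⌈(c⁻¹ + B) / B⌉₊ + 3 : ℝ) ≤ (m : ℝ) := by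
    exact_mod_cast Nat.cast_le.mpr hm
  have h1 : (c⁻¹ + B) / (δ * B) ≤ (⌈(c⁻¹ + B) / (δ * B)⌉₊ : ℝ) := Nat.le_ceil _
  have h2 : (c⁻¹ + B) / B ≤ (⌈(c⁻¹ + B) / B⌉₊ : ℝ) := Nat.le_ceil _
  have h3 : (0:ℝ) ≤ (⌈(c⁻¹ + B) / B⌉₊ : ℝ) := Nat.cast_nonneg _
  have h4 : (0:ℝ) ≤ (⌈(c⁻¹ + B) / (δ * B)⌉₊ : ℝ) := Nat.cast_nonneg _
  have hp1 : (c⁻¹ + B) / (δ * B) ≤ p := by rw [hpdef]; linarith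
  have hp2 : (c⁻¹ + B) / B ≤ p := by rw [hpdef]; linarith
  have hppos : (2:ℝ) ≤ p := by rw [hpdef]; linarith
  set A : ℝ := p * Real.pi / (2 * S) with hAdef
  clear_value A
  have hApos : 0 < A := by
    rw [hAdef]
    have : (0:ℝ) < p := by linarith
    positivity
  have hAB : A = p * B := by rw [hAdef, hBdef]; ring
  have hδA : c⁻¹ + B ≤ δ * A := by
    rw [hAB]
    have := (div_le_iff₀ (by positivity : (0:ℝ) < δ * B)).mp hp1
    linarith [this]
  have hcA : c⁻¹ + B ≤ A := by
    rw [hAB]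
    have := (div_le_iff₀ hBpos).mp hp2
    linarith [this]
  have hqpos : 0 < q m := lt_trans hApos hlo
  set ε : ℝ := q m * S - p * Real.pi / 2 with hεdef
  clear_value ε
  have hεeq : ε = (q m - A) * S := by rw [hεdef, hAdef]; field_simp
  have hε0 : 0 < ε := by
    rw [hεeq]; exact mul_pos (sub_pos.2 hlo) hS
  have hεhalf : ε < Real.pi / 2 := by
    have hm2 : ((m:ℝ)) * Real.pi / (2 * S) * S = (p + 1) * Real.pi / 2 := by
      rw [hpdef]; field_simp; ring
    have h := mul_lt_mul_of_pos_right hhi hS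
    rw [hm2] at h
    rw [hεdef]; linarith
  have hp2k : p = 2 * (k : ℝ) := by rw [hpdef, hk]; push_cast; ring
  have htan : Real.tan (q m * S) = Real.tan ε := by
    have hqs : q m * S = ε + (k : ℝ) * Real.pi := by rw [hεdef, hp2k]; ring
    rw [hqs]
    exact Real.tan_periodic.nat_mul k ε
  have heq' : q m * Real.tan ε = c⁻¹ := by rw [← htan]; exact heq
  have hcos : 0 < Real.cos ε :=
    Real.cos_pos_of_mem_Ioo ⟨by linarith, hεhalf⟩
  have hsincos : q m * Real.sin ε = c⁻¹ * Real.cos ε := by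
    rw [Real.tan_eq_sin_div_cos] at heq'
    field_simp at heq'
    field_simp
    linarith [heq']
  -- upper key
  have hlt : ε < Real.tan ε := Real.lt_tan hε0 hεhalf
  have hεq_ub : ε * q m ≤ c⁻¹ :=
    calc ε * q m ≤ Real.tan ε * q m := mul_le_mul_of_nonneg_right hlt.le hqpos.le
      _ = c⁻¹ := by rw [mul_comm]; exact heq'
  have hεA : ε * A ≤ c⁻¹ := by
    have := mul_le_mul_of_nonneg_left hlo.le hε0.le
    linarith
  -- lower key
  have hsinle : Real.sin ε ≤ ε := (Real.sin_lt hε0).le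
  have hcosge : 1 - ε ≤ Real.cos ε := by
    nlinarith [Real.one_sub_sq_div_two_le_cos (x := ε), hε0]
  have hqub : q m ≤ A + B := by
    have he : ((m:ℝ)) * Real.pi / (2 * S) = A + B := by
      rw [hAdef, hBdef, hpdef]; ring
    linarith [hhi, he.symm]
  have hεq_lb : c⁻¹ * (1 - ε) ≤ ε * q m := by
    have h5 : q m * Real.sin ε ≤ q m * ε := mul_le_mul_of_nonneg_left hsinle hqpos.le
    have h6 : c⁻¹ * (1 - ε) ≤ c⁻¹ * Real.cos ε :=
      mul_le_mul_of_nonneg_left hcosge (by positivity)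
    nlinarith [hsincos]
  have hAlow : (1 - δ) * c⁻¹ ≤ ε * A := by
    have h7 : ε * q m ≤ ε * (A + B) := mul_le_mul_of_nonneg_left hqub hε0.le
    have h8 : ε * (c⁻¹ + B) ≤ ε * (δ * A) := mul_le_mul_of_nonneg_left hδA hε0.le
    have h9 : δ * (ε * A) ≤ δ * c⁻¹ := mul_le_mul_of_nonneg_left hεA hδ.le
    nlinarith [hεq_lb]
  -- conversion
  have hπp : (0:ℝ) < Real.pi * p := by nlinarith
  have hqeq : q m = Real.pi * p / (2 * S) + ε / S := by
    rw [hεdef]; field_simp; ring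
  have hA2S : A * (2 * S) = Real.pi * p := by
    rw [hAdef]; field_simp
  constructor
  · rw [hqeq]
    have key : (1 - δ) * (2 * c⁻¹) / (Real.pi * p) ≤ ε / S := by
      rw [div_le_div_iff₀ hπp hS]
      calc (1 - δ) * (2 * c⁻¹) * S = ((1 - δ) * c⁻¹) * (2 * S) := by ring
        _ ≤ (ε * A) * (2 * S) := mul_le_mul_of_nonneg_right hAlow (by positivity)
        _ = ε * (A * (2 * S)) := by ring
        _ = ε * (Real.pi * p) := by rw [hA2S]
    linarith
  · rw [hqeq]
    have key : ε / S ≤ 2 * c⁻¹ / (Real.pi * p) := by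
      rw [div_le_div_iff₀ hS hπp]
      calc ε * (Real.pi * p) = (ε * A) * (2 * S) := by rw [← hA2S]; ring
        _ ≤ c⁻¹ * (2 * S) := mul_le_mul_of_nonneg_right hεA (by positivity)
        _ = 2 * c⁻¹ * S := by ring
    linarith
end

section
/- Let c > 0 and for t, z ∈ ℝ with z ≥ 0 define φ(t,z) = δ(t+z) − δ(t−z) + 2c⁻¹ e^{−(t−z)/c} θ(t−z) as a distribution in t depending on the parameter z ≥ 0, where θ is the Heaviside function. Then φ satisfies the 1+1-dimensional wave equation ∂_t²φ − ∂_z²φ = 0 for z > 0 (in the distributional sense), its boundary value φ|(t) = φ(t,0) equals 2c⁻¹ e^{−t/c} θ(t), and the boundary equation ∂_t² φ| = c⁻¹ ∂_z φ(·, z)|_{z=0} holds in the sense of distributions. -/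
open MeasureTheory

namespace Stmt6Aux

lemma integrable_aux {c : ℝ} {f : ℝ → ℝ} (hf : Continuous f) (hs : HasCompactSupport f) :
    Integrable (fun t => Real.exp (-t / c) * f t) := by
  have h1 : Continuous fun t : ℝ => Real.exp (-t / c) * f t :=
    (Real.continuous_exp.comp (continuous_neg.div_const c)).mul hf
  exact h1.integrable_of_hasCompactSupport hs.mul_left

lemma K_eq {c : ℝ} {f : ℝ → ℝ} (hf : Continuous f) (hs : HasCompactSupport f)
    {b : ℝ} (hb : ∀ t, b ≤ t → f t = 0) (z : ℝ) :
    (∫ t in Set.Ioi z, Real.exp (-t / c) * f t) = ∫ t in z..b, Real.exp (-t / c) * f t := by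
  have hint := integrable_aux (c := c) hf hs
  have hzero : ∀ a : ℝ, b ≤ a → (∫ t in Set.Ioi a, Real.exp (-t / c) * f t) = 0 := fun a ha =>
    setIntegral_eq_zero_of_forall_eq_zero fun x hx => by rw [hb x (ha.trans hx.le), mul_zero]
  rcases le_total z b with h | h
  · have hdisj : Disjoint (Set.Ioc z b) (Set.Ioi b) := by
      rw [Set.disjoint_left]
      rintro x ⟨_, hxb⟩ hx
      exact absurd hx (not_lt.mpr hxb)
    rw [intervalIntegral.integral_of_le h, ← Set.Ioc_union_Ioi_eq_Ioi h,
      setIntegral_union hdisj measurableSet_Ioi hint.integrableOn hint.integrableOn,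
      hzero b le_rfl, add_zero]
  · rw [hzero z h, intervalIntegral.integral_of_ge h,
      setIntegral_eq_zero_of_forall_eq_zero fun x hx => by rw [hb x hx.1.le, mul_zero], neg_zero]

lemma K_hasDerivAt {c : ℝ} {f : ℝ → ℝ} (hf : Continuous f) (hs : HasCompactSupport f) (z : ℝ) :
    HasDerivAt (fun w => ∫ t in Set.Ioi w, Real.exp (-t / c) * f t)
      (-(Real.exp (-z / c) * f z)) z := by
  obtain ⟨r, hr0, hr⟩ := hs.exists_pos_le_norm
  have hb : ∀ t, r ≤ t → f t = 0 := fun t ht => hr t (by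
    rw [Real.norm_eq_abs]; exact ht.trans (le_abs_self t))
  have heq : (fun w => ∫ t in Set.Ioi w, Real.exp (-t / c) * f t)
      = fun w => ∫ t in w..r, Real.exp (-t / c) * f t := funext (K_eq hf hs hb)
  rw [heq]
  have hcont : Continuous fun t : ℝ => Real.exp (-t / c) * f t :=
    (Real.continuous_exp.comp (continuous_neg.div_const c)).mul hf
  exact intervalIntegral.integral_hasDerivAt_left
    ((integrable_aux hf hs).intervalIntegrable)
    (hcont.stronglyMeasurableAtFilter _ _) hcont.continuousAt

lemma hasDerivAt_exp_neg (c : ℝ) (x : ℝ) :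
    HasDerivAt (fun t : ℝ => Real.exp (-t / c)) (-c⁻¹ * Real.exp (-x / c)) x := by
  have h1 : HasDerivAt (fun t : ℝ => -t / c) (-c⁻¹) x := by
    simpa [neg_div] using ((hasDerivAt_id x).neg.div_const c)
  have h2 := (Real.hasDerivAt_exp (-x / c)).comp x h1
  simpa [Function.comp_def, mul_comm] using h2

lemma K_ibp {c : ℝ} {v : ℝ → ℝ} (hv : ContDiff ℝ (⊤:ℕ∞) v) (hsv : HasCompactSupport v) (z : ℝ) :
    (∫ t in Set.Ioi z, Real.exp (-t / c) * deriv v t)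
      = -(Real.exp (-z / c) * v z) + c⁻¹ * ∫ t in Set.Ioi z, Real.exp (-t / c) * v t := by
  obtain ⟨r, hr0, hr⟩ := hsv.exists_pos_le_norm
  have hb : ∀ t, r + 1 ≤ t → v t = 0 := fun t ht => hr t (by
    rw [Real.norm_eq_abs]; exact le_trans (by linarith) (le_abs_self t))
  have hb' : ∀ t, r + 1 ≤ t → deriv v t = 0 := by
    intro t ht
    have hev : v =ᶠ[nhds t] fun _ => 0 := by
      filter_upwards [isOpen_Ioi.mem_nhds (show r < t by linarith)] with x hx
      exact hr x (by rw [Real.norm_eq_abs]; exact hx.le.trans (le_abs_self x))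
    rw [hev.deriv_eq, deriv_const]
  have hvc := hv.continuous
  have hvd : Continuous (deriv v) := (contDiff_infty_iff_deriv.mp hv).2.continuous
  have hsd : HasCompactSupport (deriv v) := hsv.deriv
  rw [K_eq hvd hsd hb' z, K_eq hvc hsv hb z]
  have hu : ∀ x ∈ Set.uIcc z (r + 1),
      HasDerivAt (fun t : ℝ => Real.exp (-t / c)) (-c⁻¹ * Real.exp (-x / c)) x :=
    fun x _ => hasDerivAt_exp_neg c x
  have hvv : ∀ x ∈ Set.uIcc z (r + 1), HasDerivAt v (deriv v x) x :=
    fun x _ => (hv.differentiable (by simp) x).hasDerivAt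
  have hu' : IntervalIntegrable (fun x : ℝ => -c⁻¹ * Real.exp (-x / c)) volume z (r + 1) :=
    (continuous_const.mul (Real.continuous_exp.comp (continuous_neg.div_const c))).intervalIntegrable _ _
  have hv' : IntervalIntegrable (deriv v) volume z (r + 1) := hvd.intervalIntegrable _ _
  rw [intervalIntegral.integral_mul_deriv_eq_deriv_mul hu hvv hu' hv',
    hb (r + 1) le_rfl, mul_zero]
  have hmm : ∀ x : ℝ, -c⁻¹ * Real.exp (-x / c) * v x = -c⁻¹ * (Real.exp (-x / c) * v x) :=
    fun x => by ring
  simp_rw [hmm]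
  rw [intervalIntegral.integral_const_mul]
  ring

noncomputable def Kf (c : ℝ) (f : ℝ → ℝ) (z : ℝ) : ℝ := ∫ t in Set.Ioi z, Real.exp (-t / c) * f t

noncomputable def Pf (c : ℝ) (f : ℝ → ℝ) (w : ℝ) : ℝ :=
  f (-w) - f w + 2 * c⁻¹ * Real.exp (w / c) * Kf c f w

noncomputable def Df (c : ℝ) (f : ℝ → ℝ) (z : ℝ) : ℝ :=
  -(deriv f (-z)) - deriv f z + c⁻¹ * (2 * c⁻¹ * Real.exp (z / c) * Kf c f z) - 2 * c⁻¹ * f z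

lemma integral_shift {c : ℝ} (z : ℝ) (f : ℝ → ℝ) :
    (∫ t in Set.Ioi z, 2 * c⁻¹ * Real.exp (-(t - z) / c) * f t)
      = 2 * c⁻¹ * Real.exp (z / c) * ∫ t in Set.Ioi z, Real.exp (-t / c) * f t := by
  rw [← integral_const_mul]
  apply integral_congr_ae
  filter_upwards with t
  rw [show -(t - z) / c = z / c + -t / c by ring, Real.exp_add]
  ring

lemma hexp_hasDerivAt (c : ℝ) (z : ℝ) :
    HasDerivAt (fun w : ℝ => Real.exp (w / c)) (Real.exp (z / c) * c⁻¹) z := by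
  have hi : HasDerivAt (fun w : ℝ => w / c) c⁻¹ z := by
    simpa [one_div] using (hasDerivAt_id z).div_const c
  simpa [Function.comp_def] using (Real.hasDerivAt_exp (z / c)).comp z hi

lemma Pf_hasDerivAt {c : ℝ} (hc : 0 < c) {f : ℝ → ℝ} (hf : ContDiff ℝ (⊤:ℕ∞) f)
    (hs : HasCompactSupport f) (z : ℝ) : HasDerivAt (Pf c f) (Df c f z) z := by
  have hfd := hf.differentiable (by simp)
  have h1 : HasDerivAt (fun w : ℝ => f (-w)) (deriv f (-z) * -1) z :=
    (hfd (-z)).hasDerivAt.comp z (hasDerivAt_neg' z)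
  have h2 : HasDerivAt f (deriv f z) z := (hfd z).hasDerivAt
  have hK := K_hasDerivAt (c := c) hf.continuous hs z
  have hg : HasDerivAt (fun w => 2 * c⁻¹ * Real.exp (w / c) * Kf c f w)
      (2 * c⁻¹ * (Real.exp (z / c) * c⁻¹) * Kf c f z
        + 2 * c⁻¹ * Real.exp (z / c) * -(Real.exp (-z / c) * f z)) z :=
    ((hexp_hasDerivAt c z).const_mul (2 * c⁻¹)).mul hK
  have H := (h1.sub h2).add hg
  have hee : Real.exp (z / c) * Real.exp (-z / c) = 1 := by
    rw [← Real.exp_add, show z / c + -z / c = 0 by ring, Real.exp_zero]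
  exact H.congr_deriv (by unfold Df; linear_combination (-(2 * c⁻¹ * f z)) * hee)

lemma Df_hasDerivAt {c : ℝ} (hc : 0 < c) {f : ℝ → ℝ} (hf : ContDiff ℝ (⊤:ℕ∞) f)
    (hs : HasCompactSupport f) (z : ℝ) :
    HasDerivAt (Df c f)
      (-(deriv (deriv f) (-z) * -1) - deriv (deriv f) z
        + c⁻¹ * (2 * c⁻¹ * (Real.exp (z / c) * c⁻¹) * Kf c f z
            + 2 * c⁻¹ * Real.exp (z / c) * -(Real.exp (-z / c) * f z))
        - 2 * c⁻¹ * deriv f z) z := by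
  have hf1 : ContDiff ℝ (⊤:ℕ∞) (deriv f) := (contDiff_infty_iff_deriv.mp hf).2
  have hfd' := hf1.differentiable (by simp)
  have h1 : HasDerivAt (fun w : ℝ => -(deriv f (-w))) (-(deriv (deriv f) (-z) * -1)) z :=
    ((hfd' (-z)).hasDerivAt.comp z (hasDerivAt_neg' z)).neg
  have h2 : HasDerivAt (deriv f) (deriv (deriv f) z) z := (hfd' z).hasDerivAt
  have h3 : HasDerivAt f (deriv f z) z := (hf.differentiable (by simp) z).hasDerivAt
  have hK := K_hasDerivAt (c := c) hf.continuous hs z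
  have hg : HasDerivAt (fun w => 2 * c⁻¹ * Real.exp (w / c) * Kf c f w)
      (2 * c⁻¹ * (Real.exp (z / c) * c⁻¹) * Kf c f z
        + 2 * c⁻¹ * Real.exp (z / c) * -(Real.exp (-z / c) * f z)) z :=
    ((hexp_hasDerivAt c z).const_mul (2 * c⁻¹)).mul hK
  exact ((h1.sub h2).add (hg.const_mul c⁻¹)).sub (h3.const_mul (2 * c⁻¹))

end Stmt6Aux

open Stmt6Aux

/-- The distribution `φ(t,z) = δ(t+z) − δ(t−z) + 2c⁻¹ e^{−(t−z)/c} θ(t−z)`, viewed as a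
distribution in `t` depending on the parameter `z`, paired against a test function `f`. -/
theorem stmt_6 (c : ℝ) (hc : 0 < c)
    (Φ : ℝ → (ℝ → ℝ) → ℝ)
    (hΦ : ∀ (z : ℝ) (f : ℝ → ℝ), Φ z f =
      f (-z) - f z + ∫ t in Set.Ioi z, 2 * c⁻¹ * Real.exp (-(t - z) / c) * f t) :
    ∀ f : ℝ → ℝ, ContDiff ℝ (⊤ : ℕ∞) f → HasCompactSupport f →
      -- wave equation ∂_t²φ − ∂_z²φ = 0 for z > 0, in the distributional sense
      (∀ z : ℝ, 0 < z → Φ z (deriv (deriv f)) = deriv (deriv (fun w => Φ w f)) z) ∧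
      -- boundary value φ|(t) = φ(t,0) = 2c⁻¹ e^{−t/c} θ(t)
      (Φ 0 f = ∫ t in Set.Ioi (0 : ℝ), 2 * c⁻¹ * Real.exp (-t / c) * f t) ∧
      -- boundary equation ∂_t² φ| = c⁻¹ ∂_z φ(·,z)|_{z=0}, in the distributional sense
      (Φ 0 (deriv (deriv f)) = c⁻¹ * deriv (fun w => Φ w f) 0) := by
  intro f hf0 hsf
  have hf : ContDiff ℝ (⊤:ℕ∞) f := hf0.of_le (by simp)
  have hf1 : ContDiff ℝ (⊤:ℕ∞) (deriv f) := (contDiff_infty_iff_deriv.mp hf).2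
  have hs1 : HasCompactSupport (deriv f) := hsf.deriv
  have hPhi : (fun w => Φ w f) = Pf c f := funext fun w => by
    rw [hΦ, integral_shift]; rfl
  have hderiv1 : deriv (fun w => Φ w f) = Df c f := by
    rw [hPhi]
    exact funext fun z => (Pf_hasDerivAt hc hf hsf z).deriv
  refine ⟨fun z _ => ?_, ?_, ?_⟩
  · rw [hderiv1, (Df_hasDerivAt hc hf hsf z).deriv, hΦ, integral_shift,
      K_ibp hf1 hs1 z, K_ibp hf hsf z]
    have hee : Real.exp (z / c) * Real.exp (-z / c) = 1 := by
      rw [← Real.exp_add, show z / c + -z / c = 0 by ring, Real.exp_zero]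
    unfold Kf
    linear_combination (-(2 * c⁻¹ * deriv f z)) * hee
  · rw [hΦ]; simp
  · rw [hΦ, integral_shift, K_ibp hf1 hs1 0, K_ibp hf hsf 0, hderiv1]
    unfold Df Kf
    simp only [neg_zero, zero_div, Real.exp_zero]
    ring
end

section
/- Let φ solve the bulk wave equation −□_g φ + μ²φ = 0 on M = ℝ × ℝ^d_+ with generalized Wentzell boundary condition −□_h φ + μ²φ = c⁻¹∂_⊥φ on ∂M. Define the boundary stress tensor T|_{ab} = c[∂_aφ ∂_bφ − (1/2)h_{ab}(∂_cφ ∂^cφ + μ²φ²)], where indices a,b run over boundary coordinates. Then ∂^a T|_{ab} = −T_{⊥b}, where T_{⊥b} = ∂_⊥φ ∂_bφ is the normal-boundary component of the bulk stress tensor restricted to ∂M. -/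
/-- Partial derivative in direction `i`. -/
noncomputable def pd {n : ℕ} (i : Fin n) (f : (Fin n → ℝ) → ℝ) (x : Fin n → ℝ) : ℝ :=
  fderiv ℝ f x (Pi.single i 1)

/-- The flat metric components `η_{ii}` (signature (−,+,…,+)), coordinate `0` is time. -/
def eta {n : ℕ} (i : Fin n) : ℝ := if (i : ℕ) = 0 then -1 else 1

lemma eta_sq {n : ℕ} (i : Fin n) : eta i * eta i = 1 := by
  unfold eta; split <;> norm_num

lemma pd_smooth {n : ℕ} (i : Fin n) {f : (Fin n → ℝ) → ℝ} (hf : ContDiff ℝ (⊤ : ℕ∞) f) :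
    ContDiff ℝ (⊤ : ℕ∞) (pd i f) :=
  (hf.fderiv_right (m := (⊤ : ℕ∞)) (by simp)).clm_apply contDiff_const

lemma pd_mul {n : ℕ} (i : Fin n) {f g : (Fin n → ℝ) → ℝ}
    (hf : Differentiable ℝ f) (hg : Differentiable ℝ g) (x : Fin n → ℝ) :
    pd i (fun y => f y * g y) x = pd i f x * g x + f x * pd i g x := by
  simp only [pd, fderiv_fun_mul (hf x) (hg x)]
  simp; ring

lemma pd_const_mul {n : ℕ} (i : Fin n) {f : (Fin n → ℝ) → ℝ} (a : ℝ)
    (hf : Differentiable ℝ f) (x : Fin n → ℝ) :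
    pd i (fun y => a * f y) x = a * pd i f x := by
  simp only [pd, fderiv_const_mul (hf x) a]; simp

lemma pd_add {n : ℕ} (i : Fin n) {f g : (Fin n → ℝ) → ℝ}
    (hf : Differentiable ℝ f) (hg : Differentiable ℝ g) (x : Fin n → ℝ) :
    pd i (fun y => f y + g y) x = pd i f x + pd i g x := by
  simp only [pd, fderiv_fun_add (hf x) (hg x)]; simp

lemma pd_sub {n : ℕ} (i : Fin n) {f g : (Fin n → ℝ) → ℝ}
    (hf : Differentiable ℝ f) (hg : Differentiable ℝ g) (x : Fin n → ℝ) :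
    pd i (fun y => f y - g y) x = pd i f x - pd i g x := by
  simp only [pd, fderiv_fun_sub (hf x) (hg x)]; simp

lemma pd_sum {n m : ℕ} (i : Fin n) (F : Fin m → (Fin n → ℝ) → ℝ)
    (hF : ∀ e, Differentiable ℝ (F e)) (x : Fin n → ℝ) :
    pd i (fun y => ∑ e, F e y) x = ∑ e, pd i (F e) x := by
  simp only [pd, fderiv_fun_sum (fun e _ => (hF e) x)]; simp

lemma pd_comm {n : ℕ} (i j : Fin n) {f : (Fin n → ℝ) → ℝ} (hf : ContDiff ℝ (⊤ : ℕ∞) f)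
    (x : Fin n → ℝ) : pd i (pd j f) x = pd j (pd i f) x := by
  have hdf : Differentiable ℝ (fderiv ℝ f) :=
    (hf.fderiv_right (m := (⊤ : ℕ∞)) (by simp)).differentiable (by simp)
  have h1 : ∀ (k : Fin n) (v : Fin n → ℝ), pd k (fun y => fderiv ℝ f y v) x =
      (fderiv ℝ (fderiv ℝ f) x) (Pi.single k 1) v := by
    intro k v
    have h := ((hdf x).hasFDerivAt).clm_apply (hasFDerivAt_const v x)
    simp only [pd]
    rw [h.fderiv]
    simp
  have hsymm := second_derivative_symmetric
    (f' := fderiv ℝ f) (f'' := fderiv ℝ (fderiv ℝ f) x)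
    (fun y => ((hf.differentiable (by simp)) y).hasFDerivAt) ((hdf x).hasFDerivAt)
  show pd i (fun y => fderiv ℝ f y (Pi.single j 1)) x = pd j (fun y => fderiv ℝ f y (Pi.single i 1)) x
  rw [h1, h1, hsymm]

/-- Bulk `M = ℝ × ℝ^d_+` with coordinates `(x^0,…,x^{d−1}, z)`, `z = x^d ≥ 0` the normal
direction; boundary `∂M = ℝ × ℝ^{d−1}` embedded via `y ↦ Fin.snoc y 0`. The boundary
stress tensor `T|_{ab} = c[∂_aφ∂_bφ − ½h_{ab}(∂_cφ∂^cφ + μ²φ²)]` satisfies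
`∂^a T|_{ab} = −T_{⊥b}` with `T_{⊥b} = ∂_⊥φ ∂_bφ`. -/
theorem stmt_11 (d : ℕ) (hd : 1 ≤ d) (c μ : ℝ) (hc : 0 < c) (hμ : 0 ≤ μ)
    (φ : (Fin (d + 1) → ℝ) → ℝ) (hφ : ContDiff ℝ (⊤ : ℕ∞) φ)
    (φb : (Fin d → ℝ) → ℝ) (hφb : ∀ y, φb y = φ (Fin.snoc y 0))
    -- bulk wave equation −□_g φ + μ²φ = 0 on {z ≥ 0}
    (hwave : ∀ x : Fin (d + 1) → ℝ, 0 ≤ x (Fin.last d) →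
      -(∑ i, eta i * pd i (pd i φ) x) + μ ^ 2 * φ x = 0)
    -- generalized Wentzell boundary condition −□_h φ + μ²φ = c⁻¹ ∂_⊥φ on ∂M
    (hbdy : ∀ y : Fin d → ℝ,
      -(∑ a, eta a * pd a (pd a φb) y) + μ ^ 2 * φb y =
        c⁻¹ * pd (Fin.last d) φ (Fin.snoc y 0))
    (Tb : Fin d → Fin d → (Fin d → ℝ) → ℝ)
    (hTb : ∀ a b y, Tb a b y =
      c * (pd a φb y * pd b φb y -
        (1 / 2) * (if a = b then eta a else 0) *
          ((∑ e, eta e * (pd e φb y) ^ 2) + μ ^ 2 * (φb y) ^ 2))) :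
    ∀ (b : Fin d) (y : Fin d → ℝ),
      ∑ a, eta a * pd a (Tb a b) y =
        -(pd (Fin.last d) φ (Fin.snoc y 0) * pd b φb y) := by
  intro b y
  -- smoothness of φb
  have hφb' : ContDiff ℝ (⊤ : ℕ∞) φb := by
    have hL : ContDiff ℝ (⊤ : ℕ∞) (fun y : Fin d → ℝ => (Fin.snoc y 0 : Fin (d+1) → ℝ)) := by
      rw [contDiff_pi]
      intro i
      refine Fin.lastCases ?_ ?_ i
      · simp only [Fin.snoc_last]; exact contDiff_const
      · intro j; simp only [Fin.snoc_castSucc]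
        exact contDiff_pi.1 contDiff_id j
    have h : φb = fun y => φ (Fin.snoc y 0) := funext hφb
    rw [h]; exact hφ.comp hL
  have hφbd : Differentiable ℝ φb := hφb'.differentiable (by simp)
  have hdb : ∀ i : Fin d, Differentiable ℝ (pd i φb) :=
    fun i => (pd_smooth i hφb').differentiable (by simp)
  -- rewrite Tb with squares expanded
  have hTb' : ∀ a : Fin d, Tb a b = fun z =>
      c * (pd a φb z * pd b φb z -
        (1 / 2) * (if a = b then eta a else 0) *
          ((∑ e, eta e * (pd e φb z * pd e φb z)) + μ ^ 2 * (φb z * φb z))) := by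
    intro a; funext z; rw [hTb]; simp only [pow_two]
  -- differentiability of the scalar part
  have hGdiff : ∀ e : Fin d, Differentiable ℝ (fun z => eta e * (pd e φb z * pd e φb z)) :=
    fun e => ((hdb e).mul (hdb e)).const_mul _
  have hSum : Differentiable ℝ (fun z => ∑ e, eta e * (pd e φb z * pd e φb z)) :=
    Differentiable.fun_sum (fun e _ => hGdiff e)
  have hS2 : Differentiable ℝ (fun z => μ ^ 2 * (φb z * φb z)) :=
    (hφbd.mul hφbd).const_mul _
  have hSdiff : Differentiable ℝ (fun z =>
      (∑ e, eta e * (pd e φb z * pd e φb z)) + μ ^ 2 * (φb z * φb z)) := hSum.add hS2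
  -- derivative of the scalar part
  have hSder : ∀ a : Fin d,
      pd a (fun z => (∑ e, eta e * (pd e φb z * pd e φb z)) + μ ^ 2 * (φb z * φb z)) y
      = (∑ e, eta e * (pd a (pd e φb) y * pd e φb y + pd e φb y * pd a (pd e φb) y))
        + μ ^ 2 * (pd a φb y * φb y + φb y * pd a φb y) := by
    intro a
    rw [pd_add a hSum hS2, pd_sum a _ (fun e => hGdiff e),
      pd_const_mul a (μ ^ 2) (hφbd.fun_mul hφbd), pd_mul a hφbd hφbd]
    congr 1
    refine Finset.sum_congr rfl (fun e _ => ?_)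
    rw [pd_const_mul a (eta e) ((hdb e).fun_mul (hdb e)), pd_mul a (hdb e) (hdb e)]
  -- derivative of Tb a b at y
  have hTder : ∀ a : Fin d, pd a (Tb a b) y =
      c * ((pd a (pd a φb) y * pd b φb y + pd a φb y * pd a (pd b φb) y)
        - (1 / 2) * (if a = b then eta a else 0) *
          ((∑ e, eta e * (pd a (pd e φb) y * pd e φb y + pd e φb y * pd a (pd e φb) y))
            + μ ^ 2 * (pd a φb y * φb y + φb y * pd a φb y))) := by
    intro a
    rw [hTb' a, pd_const_mul a c (((hdb a).fun_mul (hdb b)).fun_sub (hSdiff.const_mul _))]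
    congr 1
    rw [pd_sub a ((hdb a).fun_mul (hdb b)) (hSdiff.const_mul _), pd_mul a (hdb a) (hdb b),
      pd_const_mul a _ hSdiff, hSder a]
  -- abbreviations
  set D := pd (Fin.last d) φ (Fin.snoc y 0) with hD
  -- main computation
  have step1 : ∑ a, eta a * pd a (Tb a b) y =
      (∑ a, eta a * c * (pd a (pd a φb) y * pd b φb y))
      + (∑ a, eta a * c * (pd a φb y * pd a (pd b φb) y))
      + ∑ a, (if a = b then
          (eta a * eta a) * (-(c/2)) *
            ((∑ e, eta e * (pd a (pd e φb) y * pd e φb y + pd e φb y * pd a (pd e φb) y))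
              + μ ^ 2 * (pd a φb y * φb y + φb y * pd a φb y)) else 0) := by
    rw [← Finset.sum_add_distrib, ← Finset.sum_add_distrib]
    refine Finset.sum_congr rfl (fun a _ => ?_)
    rw [hTder a]
    by_cases h : a = b <;> simp only [h, if_true, if_false] <;> ring
  rw [step1, Finset.sum_ite_eq' Finset.univ b, if_pos (Finset.mem_univ b), eta_sq]
  -- the cross-term cancellation
  have hcancel : ∑ a, eta a * c * (pd a φb y * pd a (pd b φb) y)
      = (c/2) * ∑ e, eta e * (pd b (pd e φb) y * pd e φb y + pd e φb y * pd b (pd e φb) y) := by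
    rw [Finset.mul_sum]
    refine Finset.sum_congr rfl (fun e _ => ?_)
    rw [pd_comm b e hφb']
    ring
  rw [hcancel]
  -- the trace term via the boundary condition
  have hA : ∑ a, eta a * c * (pd a (pd a φb) y * pd b φb y)
      = c * pd b φb y * ∑ a, eta a * pd a (pd a φb) y := by
    rw [Finset.mul_sum]
    refine Finset.sum_congr rfl (fun a _ => ?_); ring
  have hB : ∑ a, eta a * pd a (pd a φb) y = μ ^ 2 * φb y - c⁻¹ * D := by
    have := hbdy y; linarith
  rw [hA, hB]
  have hcc : c * c⁻¹ = 1 := mul_inv_cancel₀ hc.ne'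
  linear_combination (-(D * pd b φb y)) * hcc
end

section
/- Let Δ be the operator on H = L²(Σ) ⊕ L²(∂Σ) (with Σ = ℝ^d_+, inner product ⟨(φ,φ|),(ψ,ψ|)⟩ = ∫_Σ φ̄ψ + c∫_{∂Σ}φ̄|ψ|, c > 0) given by Δ(φ,φ|) = ((−Δ_Σ + μ²)φ, −c⁻¹∂_⊥φ|_{∂Σ} + (−Δ_{∂Σ} + μ²)φ|), defined on the domain D = {(φ,φ|) : φ ∈ H²(Σ), φ| ∈ H²(∂Σ), φ|_{∂Σ} = φ|}. Then Δ is symmetric on D: ⟨Φ, ΔΨ⟩ = ⟨ΔΦ, Ψ⟩ for all Φ, Ψ ∈ D. -/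
open MeasureTheory
open scoped ContDiff

/-- Tangential partial derivative in direction `i`. -/
noncomputable def pdy {n : ℕ} (i : Fin n) (f : (Fin n → ℝ) → ℝ) (y : Fin n → ℝ) : ℝ :=
  fderiv ℝ f y (Pi.single i 1)

/-- Directional derivative of a function on the product space. -/
noncomputable def dd {n : ℕ} (v : (Fin n → ℝ) × ℝ) (F : (Fin n → ℝ) × ℝ → ℝ) :
    (Fin n → ℝ) × ℝ → ℝ := fun p => fderiv ℝ F p v

section AuxGeneral
variable {n : ℕ}

lemma dd_contDiff {F : (Fin n → ℝ) × ℝ → ℝ} (hF : ContDiff ℝ ∞ F) (v : (Fin n → ℝ) × ℝ) :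
    ContDiff ℝ ∞ (dd v F) :=
  (hF.fderiv_right (by norm_num)).clm_apply contDiff_const

lemma dd_hcs {F : (Fin n → ℝ) × ℝ → ℝ} (hFs : HasCompactSupport F) (v : (Fin n → ℝ) × ℝ) :
    HasCompactSupport (dd v F) :=
  (hFs.fderiv ℝ).comp_left (g := fun L : ((Fin n → ℝ) × ℝ) →L[ℝ] ℝ => L v) rfl

lemma slice_y_hcs {F : (Fin n → ℝ) × ℝ → ℝ} (hFs : HasCompactSupport F) (z : ℝ) :
    HasCompactSupport (fun y => F (y, z)) := by
  apply IsCompact.of_isClosed_subset (hFs.image continuous_fst) (isClosed_tsupport _)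
  apply closure_minimal _ (hFs.image continuous_fst).isClosed
  intro y hy
  exact ⟨(y, z), subset_closure (by simpa using hy), rfl⟩

lemma slice_z_hcs {F : (Fin n → ℝ) × ℝ → ℝ} (hFs : HasCompactSupport F) (y : Fin n → ℝ) :
    HasCompactSupport (fun z => F (y, z)) := by
  apply IsCompact.of_isClosed_subset (hFs.image continuous_snd) (isClosed_tsupport _)
  apply closure_minimal _ (hFs.image continuous_snd).isClosed
  intro z hz
  exact ⟨(y, z), subset_closure (by simpa using hz), rfl⟩

lemma int_pi {F : (Fin n → ℝ) × ℝ → ℝ} (hF : Continuous F) (hFs : HasCompactSupport F) :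
    Integrable F ((volume : Measure (Fin n → ℝ)).prod
      ((volume : Measure ℝ).restrict (Set.Ioi 0))) := by
  have h := hF.integrable_of_hasCompactSupport hFs (μ := (volume : Measure ((Fin n → ℝ) × ℝ)))
  rw [MeasureTheory.Measure.volume_eq_prod] at h
  have h2 := h.restrict (s := Set.univ ×ˢ Set.Ioi (0 : ℝ))
  rwa [← Measure.prod_restrict, Measure.restrict_univ] at h2

lemma aux_pdy_eq {F : (Fin n → ℝ) × ℝ → ℝ} (hF : Differentiable ℝ F) (i : Fin n)
    (z : ℝ) (y : Fin n → ℝ) :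
    pdy i (fun y' => F (y', z)) y = dd (Pi.single i 1, 0) F (y, z) := by
  unfold pdy dd
  have h : HasFDerivAt (fun y' => F (y', z))
      ((fderiv ℝ F (y, z)).comp ((ContinuousLinearMap.id ℝ _).prod 0)) y :=
    (hF (y, z)).hasFDerivAt.comp y (HasFDerivAt.prodMk (hasFDerivAt_id y) (hasFDerivAt_const z y))
  rw [h.fderiv]
  simp

lemma aux_deriv_eq {F : (Fin n → ℝ) × ℝ → ℝ} (hF : Differentiable ℝ F)
    (y : Fin n → ℝ) (z : ℝ) :
    deriv (fun z' => F (y, z')) z = dd (0, 1) F (y, z) := by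
  have h : HasFDerivAt (fun z' => F (y, z'))
      ((fderiv ℝ F (y, z)).comp ((0 : ℝ →L[ℝ] (Fin n → ℝ)).prod (ContinuousLinearMap.id ℝ ℝ))) z :=
    (hF (y, z)).hasFDerivAt.comp z (HasFDerivAt.prodMk (hasFDerivAt_const y z) (hasFDerivAt_id z))
  rw [h.hasDerivAt.deriv]
  simp [dd]

variable {φ : (Fin n → ℝ) → ℝ → ℝ}

lemma rep_pdy2 (hφ : ContDiff ℝ ∞ (Function.uncurry φ)) (i : Fin n) (z : ℝ) (y : Fin n → ℝ) :
    pdy i (pdy i (fun y' => φ y' z)) y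
      = dd (Pi.single i 1, 0) (dd (Pi.single i 1, 0) (Function.uncurry φ)) (y, z) := by
  have hd : Differentiable ℝ (Function.uncurry φ) := hφ.differentiable (by norm_num)
  have h1 : pdy i (fun y' => φ y' z)
      = fun y' => dd (Pi.single i 1, 0) (Function.uncurry φ) (y', z) :=
    funext fun y' => aux_pdy_eq hd i z y'
  rw [h1]
  exact aux_pdy_eq ((dd_contDiff hφ _).differentiable (by norm_num)) i z y

lemma rep_deriv1 (hφ : ContDiff ℝ ∞ (Function.uncurry φ)) (y : Fin n → ℝ) (z : ℝ) :
    deriv (φ y) z = dd (0, 1) (Function.uncurry φ) (y, z) :=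
  aux_deriv_eq (hφ.differentiable (by norm_num)) y z

lemma rep_dd2 (hφ : ContDiff ℝ ∞ (Function.uncurry φ)) (y : Fin n → ℝ) (z : ℝ) :
    deriv (deriv (φ y)) z = dd (0, 1) (dd (0, 1) (Function.uncurry φ)) (y, z) := by
  have h1 : deriv (φ y) = fun z' => dd (0, 1) (Function.uncurry φ) (y, z') :=
    funext fun z' => rep_deriv1 hφ y z'
  rw [h1]
  exact aux_deriv_eq ((dd_contDiff hφ _).differentiable (by norm_num)) y z

lemma rep_deriv2 (hφ : ContDiff ℝ ∞ (Function.uncurry φ)) (y : Fin n → ℝ) (z : ℝ) :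
    iteratedDeriv 2 (φ y) z = dd (0, 1) (dd (0, 1) (Function.uncurry φ)) (y, z) := by
  rw [show (2 : ℕ) = 1 + 1 from rfl, iteratedDeriv_succ, iteratedDeriv_one]
  exact rep_dd2 hφ y z

end AuxGeneral

section AuxTangential
variable {n : ℕ}

lemma aux_pdy_contDiff {f : (Fin n → ℝ) → ℝ} {k : ℕ∞} (hf : ContDiff ℝ (k + 1) f) (i : Fin n) :
    ContDiff ℝ k (pdy i f) :=
  (hf.fderiv_right (by exact_mod_cast le_rfl)).clm_apply contDiff_const

lemma aux_pdy_hcs {f : (Fin n → ℝ) → ℝ} (hf : HasCompactSupport f) (i : Fin n) :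
    HasCompactSupport (pdy i f) :=
  (hf.fderiv ℝ).comp_left (g := fun L : (Fin n → ℝ) →L[ℝ] ℝ => L (Pi.single i 1)) rfl

/-- One tangential integration by parts. -/
lemma aux_ibp_dir {f g : (Fin n → ℝ) → ℝ} (i : Fin n)
    (hf : ContDiff ℝ 1 f) (hg : ContDiff ℝ 1 g)
    (hfs : HasCompactSupport f) (hgs : HasCompactSupport g) :
    ∫ y, f y * pdy i g y = - ∫ y, pdy i f y * g y := by
  have h1 : Integrable (fun y => fderiv ℝ f y (Pi.single i 1) * g y) :=
    (((aux_pdy_contDiff (k := 0) (by exact_mod_cast hf) i).continuous).mul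
      hg.continuous).integrable_of_hasCompactSupport ((aux_pdy_hcs hfs i).mul_right)
  have h2 : Integrable (fun y => f y * fderiv ℝ g y (Pi.single i 1)) :=
    (hf.continuous.mul ((aux_pdy_contDiff (k := 0)
      (by exact_mod_cast hg) i).continuous)).integrable_of_hasCompactSupport
      ((aux_pdy_hcs hgs i).mul_left)
  have h3 : Integrable (fun y => f y * g y) :=
    (hf.continuous.mul hg.continuous).integrable_of_hasCompactSupport (hfs.mul_right)
  exact integral_mul_fderiv_eq_neg_fderiv_mul_of_integrable h1 h2 h3
    (fun x _ => hf.differentiable one_ne_zero x) (fun x _ => hg.differentiable one_ne_zero x)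

/-- Symmetry of the tangential Laplacian. -/
lemma aux_lap_symm {f g : (Fin n → ℝ) → ℝ}
    (hf : ContDiff ℝ 2 f) (hg : ContDiff ℝ 2 g)
    (hfs : HasCompactSupport f) (hgs : HasCompactSupport g) :
    ∫ y, f y * (∑ i, pdy i (pdy i g) y) = ∫ y, (∑ i, pdy i (pdy i f) y) * g y := by
  have key : ∀ i : Fin n, ∫ y, f y * pdy i (pdy i g) y = ∫ y, pdy i (pdy i f) y * g y := by
    intro i
    have e1 : ∫ y, f y * pdy i (pdy i g) y = - ∫ y, pdy i f y * pdy i g y :=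
      aux_ibp_dir i (hf.of_le one_le_two) ((aux_pdy_contDiff (k := 1) (by exact_mod_cast hg) i))
        hfs (aux_pdy_hcs hgs i)
    have e2 : ∫ y, pdy i f y * pdy i g y = - ∫ y, pdy i (pdy i f) y * g y :=
      aux_ibp_dir i ((aux_pdy_contDiff (k := 1) (by exact_mod_cast hf) i)) (hg.of_le one_le_two)
        (aux_pdy_hcs hfs i) hgs
    rw [e1, e2, neg_neg]
  have int1 : ∀ i : Fin n, Integrable (fun y => f y * pdy i (pdy i g) y) := by
    intro i
    exact (hf.continuous.mul ((aux_pdy_contDiff (k := 0)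
        (by exact_mod_cast (aux_pdy_contDiff (k := 1)
          (by exact_mod_cast hg) i)) i)).continuous).integrable_of_hasCompactSupport
      ((aux_pdy_hcs (aux_pdy_hcs hgs i) i).mul_left)
  have int2 : ∀ i : Fin n, Integrable (fun y => pdy i (pdy i f) y * g y) := by
    intro i
    exact (((aux_pdy_contDiff (k := 0) (by exact_mod_cast (aux_pdy_contDiff (k := 1)
        (by exact_mod_cast hf) i)) i)).continuous.mul
        hg.continuous).integrable_of_hasCompactSupport
      ((aux_pdy_hcs (aux_pdy_hcs hfs i) i).mul_right)
  calc ∫ y, f y * (∑ i, pdy i (pdy i g) y)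
      = ∫ y, ∑ i, f y * pdy i (pdy i g) y := by simp [Finset.mul_sum]
    _ = ∑ i, ∫ y, f y * pdy i (pdy i g) y := integral_finset_sum _ (fun i _ => int1 i)
    _ = ∑ i, ∫ y, pdy i (pdy i f) y * g y := by simp_rw [key]
    _ = ∫ y, ∑ i, pdy i (pdy i f) y * g y := (integral_finset_sum _ (fun i _ => int2 i)).symm
    _ = ∫ y, (∑ i, pdy i (pdy i f) y) * g y := by simp [Finset.sum_mul]

end AuxTangential

section Aux1D

lemma aux_eventually_zero {u : ℝ → ℝ} (hus : HasCompactSupport u) :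
    ∀ᶠ z in Filter.atTop, u z = 0 := by
  obtain ⟨R, hR⟩ := hus.isBounded.subset_closedBall 0
  filter_upwards [Filter.eventually_gt_atTop R] with z hz
  apply image_eq_zero_of_notMem_tsupport
  intro hmem
  have := hR hmem
  simp [Real.closedBall_eq_Icc] at this
  linarith [this.2]

lemma aux_deriv_contDiff {u : ℝ → ℝ} {k : ℕ∞} (hu : ContDiff ℝ (k + 1) u) :
    ContDiff ℝ k (deriv u) := by
  have := contDiff_succ_iff_deriv (n := (k : WithTop ℕ∞)) (f := u)
  exact (this.mp (by exact_mod_cast hu)).2.2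

/-- 1D integration by parts on `(0, ∞)`. -/
lemma aux_ibp_1d {u v : ℝ → ℝ} (hu : ContDiff ℝ 2 u) (hv : ContDiff ℝ 2 v)
    (hus : HasCompactSupport u) (hvs : HasCompactSupport v) :
    ∫ z in Set.Ioi (0 : ℝ), u z * deriv (deriv v) z
      = -(u 0 * deriv v 0) - ∫ z in Set.Ioi (0 : ℝ), deriv u z * deriv v z := by
  have hv1 : ContDiff ℝ 1 (deriv v) := aux_deriv_contDiff (k := 1) (by exact_mod_cast hv)
  have hv0 : Continuous (deriv (deriv v)) :=
    (aux_deriv_contDiff (k := 0) (by exact_mod_cast hv1)).continuous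
  have hu1 : Continuous (deriv u) :=
    (aux_deriv_contDiff (k := 1) (by exact_mod_cast hu)).continuous
  have huv' : IntegrableOn (u * deriv (deriv v)) (Set.Ioi (0:ℝ)) :=
    ((hu.continuous.mul hv0).integrable_of_hasCompactSupport hus.mul_right).restrict
  have hu'v : IntegrableOn (deriv u * deriv v) (Set.Ioi (0:ℝ)) :=
    ((hu1.mul hv1.continuous).integrable_of_hasCompactSupport (hvs.deriv.mul_left)).restrict
  have h_zero : Filter.Tendsto (u * deriv v) (nhdsWithin 0 (Set.Ioi 0)) (nhds (u 0 * deriv v 0)) :=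
    ((hu.continuous.mul hv1.continuous).continuousAt).continuousWithinAt
  have h_infty : Filter.Tendsto (u * deriv v) Filter.atTop (nhds 0) := by
    apply Filter.Tendsto.congr' _ tendsto_const_nhds
    filter_upwards [aux_eventually_zero hus] with z hz
    simp [hz]
  have := integral_Ioi_mul_deriv_eq_deriv_mul
    (u := u) (v := deriv v) (u' := deriv u) (v' := deriv (deriv v))
    (fun x _ => ((hu.differentiable two_ne_zero) x).hasDerivAt)
    (fun x _ => ((hv1.differentiable one_ne_zero) x).hasDerivAt)
    huv' hu'v h_zero h_infty
  rw [this]; ring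

end Aux1D

section AuxSplit
variable {X : Type*} [MeasurableSpace X] {π : Measure X}

lemma split_bulk_l {f A B g : X → ℝ} (r : ℝ)
    (hA : Integrable (fun x => f x * A x) π) (hB : Integrable (fun x => f x * B x) π)
    (hg : Integrable (fun x => f x * g x) π) :
    ∫ x, f x * (-(A x + B x) + r * g x) ∂π
      = -(∫ x, f x * A x ∂π) - (∫ x, f x * B x ∂π) + r * ∫ x, f x * g x ∂π := by
  have h : (fun x => f x * (-(A x + B x) + r * g x))
      = fun x => (-(f x * A x) + (-(f x * B x) + r * (f x * g x))) := funext fun x => by ring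
  have e1 := integral_add (μ := π) hA.neg (hB.neg.add (hg.const_mul r))
  have e2 := integral_add (μ := π) hB.neg (hg.const_mul r)
  simp only [Pi.add_apply, Pi.neg_apply] at e1 e2
  rw [h, e1, e2, integral_neg, integral_neg, integral_const_mul _ _]
  ring

lemma split_bulk_r {f A B g : X → ℝ} (r : ℝ)
    (hA : Integrable (fun x => A x * g x) π) (hB : Integrable (fun x => B x * g x) π)
    (hg : Integrable (fun x => f x * g x) π) :
    ∫ x, (-(A x + B x) + r * f x) * g x ∂π
      = -(∫ x, A x * g x ∂π) - (∫ x, B x * g x ∂π) + r * ∫ x, f x * g x ∂π := by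
  have h : (fun x => (-(A x + B x) + r * f x) * g x)
      = fun x => (-(A x * g x) + (-(B x * g x) + r * (f x * g x))) := funext fun x => by ring
  have e1 := integral_add (μ := π) hA.neg (hB.neg.add (hg.const_mul r))
  have e2 := integral_add (μ := π) hB.neg (hg.const_mul r)
  simp only [Pi.add_apply, Pi.neg_apply] at e1 e2
  rw [h, e1, e2, integral_neg, integral_neg, integral_const_mul _ _]
  ring

lemma split_bd_l {f Az A2 g : X → ℝ} (r s : ℝ)
    (hAz : Integrable (fun x => f x * Az x) π) (hA2 : Integrable (fun x => f x * A2 x) π)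
    (hg : Integrable (fun x => f x * g x) π) :
    ∫ x, f x * (-(s * Az x) + (-(A2 x) + r * g x)) ∂π
      = -(s * ∫ x, f x * Az x ∂π) - (∫ x, f x * A2 x ∂π) + r * ∫ x, f x * g x ∂π := by
  have h : (fun x => f x * (-(s * Az x) + (-(A2 x) + r * g x)))
      = fun x => (-(s * (f x * Az x)) + (-(f x * A2 x) + r * (f x * g x))) :=
    funext fun x => by ring
  have e1 := integral_add (μ := π) ((hAz.const_mul s).neg) (hA2.neg.add (hg.const_mul r))
  have e2 := integral_add (μ := π) hA2.neg (hg.const_mul r)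
  simp only [Pi.add_apply, Pi.neg_apply] at e1 e2
  rw [h, e1, e2, integral_neg, integral_neg, integral_const_mul _ _, integral_const_mul _ _]
  ring

lemma split_bd_r {f Az A2 g : X → ℝ} (r s : ℝ)
    (hAz : Integrable (fun x => Az x * g x) π) (hA2 : Integrable (fun x => A2 x * g x) π)
    (hg : Integrable (fun x => f x * g x) π) :
    ∫ x, (-(s * Az x) + (-(A2 x) + r * f x)) * g x ∂π
      = -(s * ∫ x, Az x * g x ∂π) - (∫ x, A2 x * g x ∂π) + r * ∫ x, f x * g x ∂π := by
  have h : (fun x => (-(s * Az x) + (-(A2 x) + r * f x)) * g x)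
      = fun x => (-(s * (Az x * g x)) + (-(A2 x * g x) + r * (f x * g x))) :=
    funext fun x => by ring
  have e1 := integral_add (μ := π) ((hAz.const_mul s).neg) (hA2.neg.add (hg.const_mul r))
  have e2 := integral_add (μ := π) hA2.neg (hg.const_mul r)
  simp only [Pi.add_apply, Pi.neg_apply] at e1 e2
  rw [h, e1, e2, integral_neg, integral_neg, integral_const_mul _ _, integral_const_mul _ _]
  ring

end AuxSplit

section AuxKey
variable {n : ℕ} {φ ψ : (Fin n → ℝ) → ℝ → ℝ}

/-- Continuity of the summed second tangential derivative. -/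
lemma cont_lap (hΦ : ContDiff ℝ ∞ (Function.uncurry φ)) :
    Continuous (fun p => ∑ i, dd (Pi.single i 1, 0)
      (dd (Pi.single i 1, 0) (Function.uncurry φ)) p) :=
  continuous_finset_sum _ fun i _ => (dd_contDiff (dd_contDiff hΦ _) _).continuous

lemma slice_y_contDiff2 (hΦ : ContDiff ℝ ∞ (Function.uncurry φ)) (z : ℝ) :
    ContDiff ℝ 2 (fun y => φ y z) :=
  (hΦ.of_le (by norm_cast)).comp (contDiff_id.prodMk contDiff_const)

lemma slice_z_contDiff2 (hΦ : ContDiff ℝ ∞ (Function.uncurry φ)) (y : Fin n → ℝ) :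
    ContDiff ℝ 2 (φ y) :=
  (hΦ.of_le (by norm_cast)).comp (contDiff_const.prodMk contDiff_id)

/-- Symmetry of the tangential part over the bulk. -/
lemma k1gen (hΦ : ContDiff ℝ ∞ (Function.uncurry φ)) (hΨ : ContDiff ℝ ∞ (Function.uncurry ψ))
    (hφs : HasCompactSupport (Function.uncurry φ))
    (hψs : HasCompactSupport (Function.uncurry ψ)) :
    ∫ p, φ p.1 p.2 * (∑ i, dd (Pi.single i 1, 0) (dd (Pi.single i 1, 0) (Function.uncurry ψ)) p)
        ∂((volume : Measure (Fin n → ℝ)).prod ((volume : Measure ℝ).restrict (Set.Ioi 0)))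
      = ∫ p, (∑ i, dd (Pi.single i 1, 0) (dd (Pi.single i 1, 0) (Function.uncurry φ)) p)
          * ψ p.1 p.2
        ∂((volume : Measure (Fin n → ℝ)).prod ((volume : Measure ℝ).restrict (Set.Ioi 0))) := by
  have iL : Integrable (fun p => φ p.1 p.2 * (∑ i, dd (Pi.single i 1, 0)
      (dd (Pi.single i 1, 0) (Function.uncurry ψ)) p))
      ((volume : Measure (Fin n → ℝ)).prod ((volume : Measure ℝ).restrict (Set.Ioi 0))) :=
    int_pi (hΦ.continuous.mul (cont_lap hΨ)) (hφs.mul_right)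
  have iR : Integrable (fun p => (∑ i, dd (Pi.single i 1, 0)
      (dd (Pi.single i 1, 0) (Function.uncurry φ)) p) * ψ p.1 p.2)
      ((volume : Measure (Fin n → ℝ)).prod ((volume : Measure ℝ).restrict (Set.Ioi 0))) :=
    int_pi ((cont_lap hΦ).mul hΨ.continuous) (hψs.mul_left)
  have eL : (∫ p, φ p.1 p.2 * (∑ i, dd (Pi.single i 1, 0)
        (dd (Pi.single i 1, 0) (Function.uncurry ψ)) p)
        ∂((volume : Measure (Fin n → ℝ)).prod ((volume : Measure ℝ).restrict (Set.Ioi 0))))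
      = ∫ z in Set.Ioi (0 : ℝ), ∫ y, φ y z * (∑ i, dd (Pi.single i 1, 0)
          (dd (Pi.single i 1, 0) (Function.uncurry ψ)) (y, z)) :=
    integral_prod_symm _ iL
  have eR : (∫ p, (∑ i, dd (Pi.single i 1, 0)
        (dd (Pi.single i 1, 0) (Function.uncurry φ)) p) * ψ p.1 p.2
        ∂((volume : Measure (Fin n → ℝ)).prod ((volume : Measure ℝ).restrict (Set.Ioi 0))))
      = ∫ z in Set.Ioi (0 : ℝ), ∫ y, (∑ i, dd (Pi.single i 1, 0)
          (dd (Pi.single i 1, 0) (Function.uncurry φ)) (y, z)) * ψ y z :=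
    integral_prod_symm _ iR
  rw [eL, eR]
  refine integral_congr_ae (Filter.Eventually.of_forall fun z => ?_)
  beta_reduce
  have h1 : (fun y => φ y z * (∑ i, dd (Pi.single i 1, 0)
      (dd (Pi.single i 1, 0) (Function.uncurry ψ)) (y, z)))
      = fun y => φ y z * (∑ i, pdy i (pdy i (fun y' => ψ y' z)) y) :=
    funext fun y => by
      rw [Finset.sum_congr rfl fun i _ => (rep_pdy2 hΨ i z y).symm]
  have h2 : (fun y => (∑ i, dd (Pi.single i 1, 0)
      (dd (Pi.single i 1, 0) (Function.uncurry φ)) (y, z)) * ψ y z)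
      = fun y => (∑ i, pdy i (pdy i (fun y' => φ y' z)) y) * ψ y z :=
    funext fun y => by
      rw [Finset.sum_congr rfl fun i _ => (rep_pdy2 hΦ i z y).symm]
  rw [h1, h2]
  exact aux_lap_symm (slice_y_contDiff2 hΦ z) (slice_y_contDiff2 hΨ z)
    (slice_y_hcs hφs z) (slice_y_hcs hψs z)

/-- Normal-direction integration by parts over the bulk. -/
lemma k2gen (hΦ : ContDiff ℝ ∞ (Function.uncurry φ)) (hΨ : ContDiff ℝ ∞ (Function.uncurry ψ))
    (hφs : HasCompactSupport (Function.uncurry φ))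
    (hψs : HasCompactSupport (Function.uncurry ψ)) :
    ∫ p, φ p.1 p.2 * dd (0, 1) (dd (0, 1) (Function.uncurry ψ)) p
        ∂((volume : Measure (Fin n → ℝ)).prod ((volume : Measure ℝ).restrict (Set.Ioi 0)))
      = -(∫ y, φ y 0 * dd (0, 1) (Function.uncurry ψ) (y, 0))
        - ∫ p, dd (0, 1) (Function.uncurry φ) p * dd (0, 1) (Function.uncurry ψ) p
          ∂((volume : Measure (Fin n → ℝ)).prod ((volume : Measure ℝ).restrict (Set.Ioi 0))) := by
  have iL : Integrable (fun p => φ p.1 p.2 * dd (0, 1) (dd (0, 1) (Function.uncurry ψ)) p)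
      ((volume : Measure (Fin n → ℝ)).prod ((volume : Measure ℝ).restrict (Set.Ioi 0))) :=
    int_pi (hΦ.continuous.mul (dd_contDiff (dd_contDiff hΨ _) _).continuous) (hφs.mul_right)
  have iZZ : Integrable (fun p => dd (0, 1) (Function.uncurry φ) p
      * dd (0, 1) (Function.uncurry ψ) p)
      ((volume : Measure (Fin n → ℝ)).prod ((volume : Measure ℝ).restrict (Set.Ioi 0))) :=
    int_pi ((dd_contDiff hΦ _).continuous.mul (dd_contDiff hΨ _).continuous)
      ((dd_hcs hφs _).mul_right)
  have eL : (∫ p, φ p.1 p.2 * dd (0, 1) (dd (0, 1) (Function.uncurry ψ)) p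
        ∂((volume : Measure (Fin n → ℝ)).prod ((volume : Measure ℝ).restrict (Set.Ioi 0))))
      = ∫ y, ∫ z in Set.Ioi (0 : ℝ), φ y z * dd (0, 1) (dd (0, 1) (Function.uncurry ψ)) (y, z) :=
    integral_prod _ iL
  have eZZ : (∫ y, ∫ z in Set.Ioi (0 : ℝ), dd (0, 1) (Function.uncurry φ) (y, z)
        * dd (0, 1) (Function.uncurry ψ) (y, z))
      = ∫ p, dd (0, 1) (Function.uncurry φ) p * dd (0, 1) (Function.uncurry ψ) p
        ∂((volume : Measure (Fin n → ℝ)).prod ((volume : Measure ℝ).restrict (Set.Ioi 0))) :=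
    (integral_prod _ iZZ).symm
  have inner : ∀ y, (∫ z in Set.Ioi (0 : ℝ), φ y z * dd (0, 1)
      (dd (0, 1) (Function.uncurry ψ)) (y, z))
      = -(φ y 0 * dd (0, 1) (Function.uncurry ψ) (y, 0))
        - ∫ z in Set.Ioi (0 : ℝ), dd (0, 1) (Function.uncurry φ) (y, z)
          * dd (0, 1) (Function.uncurry ψ) (y, z) := by
    intro y
    have hcong : (fun z => φ y z * dd (0, 1) (dd (0, 1) (Function.uncurry ψ)) (y, z))
        = fun z => φ y z * deriv (deriv (ψ y)) z := funext fun z => by rw [rep_dd2 hΨ]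
    have hcong2 : (fun z => deriv (φ y) z * deriv (ψ y) z)
        = fun z => dd (0, 1) (Function.uncurry φ) (y, z)
          * dd (0, 1) (Function.uncurry ψ) (y, z) :=
      funext fun z => by rw [rep_deriv1 hΦ, rep_deriv1 hΨ]
    calc (∫ z in Set.Ioi (0 : ℝ), φ y z * dd (0, 1) (dd (0, 1) (Function.uncurry ψ)) (y, z))
        = ∫ z in Set.Ioi (0 : ℝ), φ y z * deriv (deriv (ψ y)) z := by rw [hcong]
      _ = -(φ y 0 * deriv (ψ y) 0) - ∫ z in Set.Ioi (0 : ℝ), deriv (φ y) z * deriv (ψ y) z :=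
          aux_ibp_1d (slice_z_contDiff2 hΦ y) (slice_z_contDiff2 hΨ y)
            (slice_z_hcs hφs y) (slice_z_hcs hψs y)
      _ = -(φ y 0 * dd (0, 1) (Function.uncurry ψ) (y, 0))
            - ∫ z in Set.Ioi (0 : ℝ), dd (0, 1) (Function.uncurry φ) (y, z)
              * dd (0, 1) (Function.uncurry ψ) (y, z) := by
          rw [rep_deriv1 hΨ, hcong2]
  have hbd : Integrable (fun y => -(φ y 0 * dd (0, 1) (Function.uncurry ψ) (y, 0)))
      (volume : Measure (Fin n → ℝ)) := by
    apply Integrable.neg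
    exact ((hΦ.continuous.mul (dd_contDiff hΨ _).continuous).comp
        (continuous_id.prodMk continuous_const)).integrable_of_hasCompactSupport
      (slice_y_hcs (hφs.mul_right) 0)
  have hmarg : Integrable (fun y => ∫ z in Set.Ioi (0 : ℝ),
      dd (0, 1) (Function.uncurry φ) (y, z) * dd (0, 1) (Function.uncurry ψ) (y, z))
      (volume : Measure (Fin n → ℝ)) := iZZ.integral_prod_left
  have esub := integral_sub hbd hmarg
  calc (∫ p, φ p.1 p.2 * dd (0, 1) (dd (0, 1) (Function.uncurry ψ)) p
        ∂((volume : Measure (Fin n → ℝ)).prod ((volume : Measure ℝ).restrict (Set.Ioi 0))))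
      = ∫ y, ∫ z in Set.Ioi (0 : ℝ), φ y z
          * dd (0, 1) (dd (0, 1) (Function.uncurry ψ)) (y, z) := eL
    _ = ∫ y, (-(φ y 0 * dd (0, 1) (Function.uncurry ψ) (y, 0))
          - ∫ z in Set.Ioi (0 : ℝ), dd (0, 1) (Function.uncurry φ) (y, z)
            * dd (0, 1) (Function.uncurry ψ) (y, z)) :=
        integral_congr_ae (Filter.Eventually.of_forall inner)
    _ = (∫ y, -(φ y 0 * dd (0, 1) (Function.uncurry ψ) (y, 0)))
          - ∫ y, ∫ z in Set.Ioi (0 : ℝ), dd (0, 1) (Function.uncurry φ) (y, z)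
            * dd (0, 1) (Function.uncurry ψ) (y, z) := integral_sub hbd hmarg
    _ = -(∫ y, φ y 0 * dd (0, 1) (Function.uncurry ψ) (y, 0))
          - ∫ p, dd (0, 1) (Function.uncurry φ) p * dd (0, 1) (Function.uncurry ψ) p
            ∂((volume : Measure (Fin n → ℝ)).prod ((volume : Measure ℝ).restrict (Set.Ioi 0))) := by
        rw [integral_neg, eZZ]

/-- Symmetry of the tangential part on the boundary. -/
lemma k3gen (hΦ : ContDiff ℝ ∞ (Function.uncurry φ)) (hΨ : ContDiff ℝ ∞ (Function.uncurry ψ))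
    (hφs : HasCompactSupport (Function.uncurry φ))
    (hψs : HasCompactSupport (Function.uncurry ψ)) :
    (∫ y, φ y 0 * (∑ i, dd (Pi.single i 1, 0)
        (dd (Pi.single i 1, 0) (Function.uncurry ψ)) (y, 0)))
      = ∫ y, (∑ i, dd (Pi.single i 1, 0)
          (dd (Pi.single i 1, 0) (Function.uncurry φ)) (y, 0)) * ψ y 0 := by
  have h1 : (fun y => φ y 0 * (∑ i, dd (Pi.single i 1, 0)
      (dd (Pi.single i 1, 0) (Function.uncurry ψ)) (y, 0)))
      = fun y => φ y 0 * (∑ i, pdy i (pdy i (fun y' => ψ y' 0)) y) :=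
    funext fun y => by
      rw [Finset.sum_congr rfl fun i _ => (rep_pdy2 hΨ i 0 y).symm]
  have h2 : (fun y => (∑ i, dd (Pi.single i 1, 0)
      (dd (Pi.single i 1, 0) (Function.uncurry φ)) (y, 0)) * ψ y 0)
      = fun y => (∑ i, pdy i (pdy i (fun y' => φ y' 0)) y) * ψ y 0 :=
    funext fun y => by
      rw [Finset.sum_congr rfl fun i _ => (rep_pdy2 hΦ i 0 y).symm]
  rw [h1, h2]
  exact aux_lap_symm (slice_y_contDiff2 hΦ 0) (slice_y_contDiff2 hΨ 0)
    (slice_y_hcs hφs 0) (slice_y_hcs hψs 0)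

end AuxKey

set_option maxHeartbeats 2000000 in
/-- Symmetry of the Wentzell operator
`Δ(φ,φ|) = ((−Δ_Σ + μ²)φ, −c⁻¹∂_⊥φ|_{∂Σ} + (−Δ_{∂Σ} + μ²)φ|)` on
`H = L²(Σ) ⊕ L²(∂Σ)`, `Σ = ℝ^n × [0,∞)`, with inner product
`⟨(φ,φ|),(ψ,ψ|)⟩ = ∫_Σ φψ + c∫_{∂Σ} φ|ψ|`, on the domain where the trace condition
`φ|_{∂Σ} = φ|` holds. -/
theorem stmt_16 (n : ℕ) (c μ : ℝ) (hc : 0 < c) (hμ : 0 ≤ μ)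
    (φ ψ : (Fin n → ℝ) → ℝ → ℝ) (φb ψb : (Fin n → ℝ) → ℝ)
    (hφ : ContDiff ℝ (⊤ : ℕ∞) (Function.uncurry φ)) (hψ : ContDiff ℝ (⊤ : ℕ∞) (Function.uncurry ψ))
    (hφs : HasCompactSupport (Function.uncurry φ))
    (hψs : HasCompactSupport (Function.uncurry ψ))
    (hφtr : ∀ y, φb y = φ y 0) (hψtr : ∀ y, ψb y = ψ y 0) :
    (∫ y : Fin n → ℝ, ∫ z in Set.Ioi (0 : ℝ),
        φ y z * (-((∑ i, pdy i (pdy i (fun y' => ψ y' z)) y) + iteratedDeriv 2 (ψ y) z) +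
          μ ^ 2 * ψ y z)) +
      c * ∫ y : Fin n → ℝ,
        φb y * (-(c⁻¹ * deriv (ψ y) 0) +
          (-(∑ i, pdy i (pdy i ψb) y) + μ ^ 2 * ψb y)) =
    (∫ y : Fin n → ℝ, ∫ z in Set.Ioi (0 : ℝ),
        (-((∑ i, pdy i (pdy i (fun y' => φ y' z)) y) + iteratedDeriv 2 (φ y) z) +
          μ ^ 2 * φ y z) * ψ y z) +
      c * ∫ y : Fin n → ℝ,
        (-(c⁻¹ * deriv (φ y) 0) + (-(∑ i, pdy i (pdy i φb) y) + μ ^ 2 * φb y)) * ψb y := by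
  classical
  have hΦ : ContDiff ℝ ∞ (Function.uncurry φ) := hφ.of_le (by simp)
  have hΨ : ContDiff ℝ ∞ (Function.uncurry ψ) := hψ.of_le (by simp)
  have hφb : φb = fun y => φ y 0 := funext hφtr
  have hψb : ψb = fun y => ψ y 0 := funext hψtr
  subst hφb hψb
  simp only [rep_pdy2 hΨ, rep_pdy2 hΦ, rep_deriv2 hΨ, rep_deriv2 hΦ,
    rep_deriv1 hΨ, rep_deriv1 hΦ]
  -- continuity abbreviations
  have cSψ := cont_lap hΨ
  have cSφ := cont_lap hΦ
  have cZψ : Continuous (dd (0, 1) (dd (0, 1) (Function.uncurry ψ))) :=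
    (dd_contDiff (dd_contDiff hΨ _) _).continuous
  have cZφ : Continuous (dd (0, 1) (dd (0, 1) (Function.uncurry φ))) :=
    (dd_contDiff (dd_contDiff hΦ _) _).continuous
  have czψ : Continuous (dd (0, 1) (Function.uncurry ψ)) := (dd_contDiff hΨ _).continuous
  have czφ : Continuous (dd (0, 1) (Function.uncurry φ)) := (dd_contDiff hΦ _).continuous
  -- bulk integrabilities
  have iA1 : Integrable (fun p => φ p.1 p.2 * ∑ i, dd (Pi.single i 1, 0)
      (dd (Pi.single i 1, 0) (Function.uncurry ψ)) p)
      ((volume : Measure (Fin n → ℝ)).prod ((volume : Measure ℝ).restrict (Set.Ioi 0))) :=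
    int_pi (hΦ.continuous.mul cSψ) hφs.mul_right
  have iA2 : Integrable (fun p => φ p.1 p.2 * dd (0, 1) (dd (0, 1) (Function.uncurry ψ)) p)
      ((volume : Measure (Fin n → ℝ)).prod ((volume : Measure ℝ).restrict (Set.Ioi 0))) :=
    int_pi (hΦ.continuous.mul cZψ) hφs.mul_right
  have iA0 : Integrable (fun p => φ p.1 p.2 * ψ p.1 p.2)
      ((volume : Measure (Fin n → ℝ)).prod ((volume : Measure ℝ).restrict (Set.Ioi 0))) :=
    int_pi (hΦ.continuous.mul hΨ.continuous) hφs.mul_right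
  have iA1' : Integrable (fun p => (∑ i, dd (Pi.single i 1, 0)
      (dd (Pi.single i 1, 0) (Function.uncurry φ)) p) * ψ p.1 p.2)
      ((volume : Measure (Fin n → ℝ)).prod ((volume : Measure ℝ).restrict (Set.Ioi 0))) :=
    int_pi (cSφ.mul hΨ.continuous) hψs.mul_left
  have iA2' : Integrable (fun p => dd (0, 1) (dd (0, 1) (Function.uncurry φ)) p * ψ p.1 p.2)
      ((volume : Measure (Fin n → ℝ)).prod ((volume : Measure ℝ).restrict (Set.Ioi 0))) :=
    int_pi (cZφ.mul hΨ.continuous) hψs.mul_left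
  -- boundary integrabilities
  have pΦΨz : HasCompactSupport (fun p : (Fin n → ℝ) × ℝ =>
      φ p.1 p.2 * dd (0, 1) (Function.uncurry ψ) p) := hφs.mul_right
  have pΦS : HasCompactSupport (fun p : (Fin n → ℝ) × ℝ => φ p.1 p.2 * ∑ i, dd (Pi.single i 1, 0)
      (dd (Pi.single i 1, 0) (Function.uncurry ψ)) p) := hφs.mul_right
  have pΦΨ : HasCompactSupport (fun p : (Fin n → ℝ) × ℝ => φ p.1 p.2 * ψ p.1 p.2) :=
    hφs.mul_right
  have pΦzΨ : HasCompactSupport (fun p : (Fin n → ℝ) × ℝ =>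
      dd (0, 1) (Function.uncurry φ) p * ψ p.1 p.2) := hψs.mul_left
  have pSΨ : HasCompactSupport (fun p : (Fin n → ℝ) × ℝ => (∑ i, dd (Pi.single i 1, 0)
      (dd (Pi.single i 1, 0) (Function.uncurry φ)) p) * ψ p.1 p.2) := hψs.mul_left
  have bΦΨz : Integrable (fun y => φ y 0 * dd (0, 1) (Function.uncurry ψ) (y, 0))
      (volume : Measure (Fin n → ℝ)) :=
    (((hΦ.continuous.mul czψ).comp
        (continuous_id.prodMk continuous_const)).integrable_of_hasCompactSupport
      (slice_y_hcs pΦΨz 0))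
  have bΦS : Integrable (fun y => φ y 0 * ∑ i, dd (Pi.single i 1, 0)
      (dd (Pi.single i 1, 0) (Function.uncurry ψ)) (y, 0)) (volume : Measure (Fin n → ℝ)) :=
    (((hΦ.continuous.mul cSψ).comp
        (continuous_id.prodMk continuous_const)).integrable_of_hasCompactSupport
      (slice_y_hcs pΦS 0))
  have bΦΨ : Integrable (fun y => φ y 0 * ψ y 0) (volume : Measure (Fin n → ℝ)) :=
    (((hΦ.continuous.mul hΨ.continuous).comp
        (continuous_id.prodMk continuous_const)).integrable_of_hasCompactSupport
      (slice_y_hcs pΦΨ 0))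
  have bΦzΨ : Integrable (fun y => dd (0, 1) (Function.uncurry φ) (y, 0) * ψ y 0)
      (volume : Measure (Fin n → ℝ)) :=
    (((czφ.mul hΨ.continuous).comp
        (continuous_id.prodMk continuous_const)).integrable_of_hasCompactSupport
      (slice_y_hcs pΦzΨ 0))
  have bSΨ : Integrable (fun y => (∑ i, dd (Pi.single i 1, 0)
      (dd (Pi.single i 1, 0) (Function.uncurry φ)) (y, 0)) * ψ y 0)
      (volume : Measure (Fin n → ℝ)) :=
    (((cSφ.mul hΨ.continuous).comp
        (continuous_id.prodMk continuous_const)).integrable_of_hasCompactSupport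
      (slice_y_hcs pSΨ 0))
  -- bulk full-integrand integrabilities
  have ibulkL : Integrable (fun p => φ p.1 p.2 * (-((∑ i, dd (Pi.single i 1, 0)
      (dd (Pi.single i 1, 0) (Function.uncurry ψ)) p)
        + dd (0, 1) (dd (0, 1) (Function.uncurry ψ)) p) + μ ^ 2 * ψ p.1 p.2))
      ((volume : Measure (Fin n → ℝ)).prod ((volume : Measure ℝ).restrict (Set.Ioi 0))) :=
    int_pi (hΦ.continuous.mul (((cSψ.add cZψ).neg).add
      (continuous_const.mul hΨ.continuous))) hφs.mul_right
  have ibulkR : Integrable (fun p => (-((∑ i, dd (Pi.single i 1, 0)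
      (dd (Pi.single i 1, 0) (Function.uncurry φ)) p)
        + dd (0, 1) (dd (0, 1) (Function.uncurry φ)) p) + μ ^ 2 * φ p.1 p.2) * ψ p.1 p.2)
      ((volume : Measure (Fin n → ℝ)).prod ((volume : Measure ℝ).restrict (Set.Ioi 0))) :=
    int_pi (((((cSφ.add cZφ).neg).add
      (continuous_const.mul hΦ.continuous))).mul hΨ.continuous) hψs.mul_left
  -- iterated-to-product conversions
  have eIterL : (∫ y, ∫ z in Set.Ioi (0 : ℝ), φ y z
        * (-((∑ i, dd (Pi.single i 1, 0) (dd (Pi.single i 1, 0) (Function.uncurry ψ)) (y, z))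
            + dd (0, 1) (dd (0, 1) (Function.uncurry ψ)) (y, z)) + μ ^ 2 * ψ y z))
      = ∫ p, φ p.1 p.2 * (-((∑ i, dd (Pi.single i 1, 0)
          (dd (Pi.single i 1, 0) (Function.uncurry ψ)) p)
            + dd (0, 1) (dd (0, 1) (Function.uncurry ψ)) p) + μ ^ 2 * ψ p.1 p.2)
        ∂((volume : Measure (Fin n → ℝ)).prod ((volume : Measure ℝ).restrict (Set.Ioi 0))) :=
    (integral_prod _ ibulkL).symm
  have eIterR : (∫ y, ∫ z in Set.Ioi (0 : ℝ),
        (-((∑ i, dd (Pi.single i 1, 0) (dd (Pi.single i 1, 0) (Function.uncurry φ)) (y, z))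
            + dd (0, 1) (dd (0, 1) (Function.uncurry φ)) (y, z)) + μ ^ 2 * φ y z) * ψ y z)
      = ∫ p, (-((∑ i, dd (Pi.single i 1, 0)
          (dd (Pi.single i 1, 0) (Function.uncurry φ)) p)
            + dd (0, 1) (dd (0, 1) (Function.uncurry φ)) p) + μ ^ 2 * φ p.1 p.2) * ψ p.1 p.2
        ∂((volume : Measure (Fin n → ℝ)).prod ((volume : Measure ℝ).restrict (Set.Ioi 0))) :=
    (integral_prod _ ibulkR).symm
  -- splittings
  have eSplitL := split_bulk_l
    (π := ((volume : Measure (Fin n → ℝ)).prod ((volume : Measure ℝ).restrict (Set.Ioi 0))))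
    (f := fun p => φ p.1 p.2)
    (A := fun p => ∑ i, dd (Pi.single i 1, 0) (dd (Pi.single i 1, 0) (Function.uncurry ψ)) p)
    (B := fun p => dd (0, 1) (dd (0, 1) (Function.uncurry ψ)) p)
    (g := fun p => ψ p.1 p.2) (μ ^ 2) iA1 iA2 iA0
  have eSplitR := split_bulk_r
    (π := ((volume : Measure (Fin n → ℝ)).prod ((volume : Measure ℝ).restrict (Set.Ioi 0))))
    (f := fun p => φ p.1 p.2)
    (A := fun p => ∑ i, dd (Pi.single i 1, 0) (dd (Pi.single i 1, 0) (Function.uncurry φ)) p)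
    (B := fun p => dd (0, 1) (dd (0, 1) (Function.uncurry φ)) p)
    (g := fun p => ψ p.1 p.2) (μ ^ 2) iA1' iA2' iA0
  have eBdL := split_bd_l (π := (volume : Measure (Fin n → ℝ)))
    (f := fun y => φ y 0)
    (Az := fun y => dd (0, 1) (Function.uncurry ψ) (y, 0))
    (A2 := fun y => ∑ i, dd (Pi.single i 1, 0) (dd (Pi.single i 1, 0) (Function.uncurry ψ)) (y, 0))
    (g := fun y => ψ y 0) (μ ^ 2) c⁻¹ bΦΨz bΦS bΦΨ
  have eBdR := split_bd_r (π := (volume : Measure (Fin n → ℝ)))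
    (f := fun y => φ y 0)
    (Az := fun y => dd (0, 1) (Function.uncurry φ) (y, 0))
    (A2 := fun y => ∑ i, dd (Pi.single i 1, 0) (dd (Pi.single i 1, 0) (Function.uncurry φ)) (y, 0))
    (g := fun y => ψ y 0) (μ ^ 2) c⁻¹ bΦzΨ bSΨ bΦΨ
  beta_reduce at eSplitL eSplitR eBdL eBdR
  have EL1 := eIterL.trans eSplitL
  have ER1 := eIterR.trans eSplitR
  -- key identities
  have K1 := k1gen hΦ hΨ hφs hψs
  have K2 := k2gen hΦ hΨ hφs hψs
  have K3 := k3gen hΦ hΨ hφs hψs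
  have K2' : (∫ p, dd (0, 1) (dd (0, 1) (Function.uncurry φ)) p * ψ p.1 p.2
        ∂((volume : Measure (Fin n → ℝ)).prod ((volume : Measure ℝ).restrict (Set.Ioi 0))))
      = -(∫ y, dd (0, 1) (Function.uncurry φ) (y, 0) * ψ y 0)
        - ∫ p, dd (0, 1) (Function.uncurry φ) p * dd (0, 1) (Function.uncurry ψ) p
          ∂((volume : Measure (Fin n → ℝ)).prod ((volume : Measure ℝ).restrict (Set.Ioi 0))) := by
    have h := k2gen hΨ hΦ hψs hφs
    have c1 : (fun p : (Fin n → ℝ) × ℝ => dd (0, 1) (dd (0, 1) (Function.uncurry φ)) p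
        * ψ p.1 p.2) = fun p => ψ p.1 p.2 * dd (0, 1) (dd (0, 1) (Function.uncurry φ)) p :=
      funext fun p => mul_comm _ _
    have c2 : (fun y => ψ y 0 * dd (0, 1) (Function.uncurry φ) (y, 0))
        = fun y => dd (0, 1) (Function.uncurry φ) (y, 0) * ψ y 0 := funext fun y => mul_comm _ _
    have c3 : (fun p : (Fin n → ℝ) × ℝ => dd (0, 1) (Function.uncurry ψ) p
        * dd (0, 1) (Function.uncurry φ) p)
        = fun p => dd (0, 1) (Function.uncurry φ) p * dd (0, 1) (Function.uncurry ψ) p :=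
      funext fun p => mul_comm _ _
    rw [c1, h, c2, c3]
  rw [EL1, ER1, eBdL, eBdR, K1, K2, K2', K3]
  field_simp
  ring
end
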